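/- arXiv:2011.03892 — 2 statements merged into one kernel-verified Lean document; each statement's English description precedes it below -/
import Mathlib

section
/- (NO-case theorem, Section 4) Assume S is a NO instance of k-OV: every k vectors v_1,…,v_k ∈ S (repetitions allowed) have a common coordinate x ∈ [d] with v_1[x] = ⋯ = v_k[x] = 1. Then the diameter of G is at most k, i.e., d(α,β) ≤ k for all ordered pairs of vertices α, β of G. -/
namespace DiamLB

/-! ## Generic directed-graph notions -/

/-- There is a directed walk of length `n` from `a` to `b`. -/
def HasWalkLen {V : Type*} (Adj : V → V → Prop) : ℕ → V → V → Prop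
  | 0, a, b => a = b
  | n + 1, a, b => ∃ c, Adj a c ∧ HasWalkLen Adj n c b

/-- `P 0, P 1, …, P n` is a directed walk. -/
def IsWalk {V : Type*} (Adj : V → V → Prop) (P : ℕ → V) (n : ℕ) : Prop :=
  ∀ t, t < n → Adj (P t) (P (t + 1))

/-- The shortest-path distance from `a` to `b` is at most `m`. -/
def DistLE {V : Type*} (Adj : V → V → Prop) (a b : V) (m : ℕ) : Prop :=
  ∃ n ≤ m, HasWalkLen Adj n a b

/-! ## The construction (Section 3, `k ≥ 5`) -/

/-- Boolean vectors of length `d`, i.e. elements of `{0,1}^d`. -/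
abbrev Vec (d : ℕ) := Fin d → Bool

/-- The all-ones vector. -/
def ones (d : ℕ) : Vec d := fun _ => true

/-- Tags naming the layers of the construction. -/
inductive Tag : Type
  | L (i : ℕ)
  | L' (i : ℕ)
  | A (i : ℕ)
  | B (i : ℕ)

/-- Potential vertices of the construction: a tagged partial tuple of vectors
(position `j : Fin k` holding the vector with 1-based index `j+1`) together with a
coordinate array `x` (1-based entry `x_ℓ` at position `ℓ-1 : Fin (k-1)`), plus the two
special vertices `uu` (the vertex `u`) and `vv` (the vertex `v`).  Vertices carrying no
coordinate array in the paper are modelled with the all-zero coordinate array. -/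
inductive Vert (k d : ℕ) : Type
  | node (tag : Tag) (p : Fin k → Option (Vec d)) (x : Fin (k - 1) → Fin d) : Vert k d
  | uu : Vert k d
  | vv : Vert k d

/-- The positions (0-based) satisfying `F` are filled by vectors of `S`, and the other
positions are empty. -/
def FillsS (k d : ℕ) (S : Finset (Vec d)) (F : ℕ → Prop) (p : Fin k → Option (Vec d)) :
    Prop :=
  ∀ j : Fin k, (F (j : ℕ) → ∃ a ∈ S, p j = some a) ∧ (¬ F (j : ℕ) → p j = none)

/-- The dummy (all-zero) coordinate array, used for vertices that carry no coordinate
array in the paper. -/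
def ZeroX (k d : ℕ) (x : Fin (k - 1) → Fin d) : Prop :=
  ∀ ℓ, (x ℓ : ℕ) = 0

/-- The compatibility condition between the vector tuple and the coordinate array of a
vertex of `L_i` (Table 1): for `1 ≤ j ≤ k-i` (the `a_j`), `a_j[x_ℓ] = 1` for all
`1 ≤ ℓ ≤ k-j`, and for `k-i+3 ≤ j ≤ k` (the `b_j`), `b_j[x_ℓ] = 1` for all
`k-j+1 ≤ ℓ ≤ k-1`.  (Everything is 0-based here: position `j` holds the vector with
1-based index `j+1`, and `x ℓ` is the 1-based coordinate `x_{ℓ+1}`.) -/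
def BitCond (k d : ℕ) (i : ℕ) (p : Fin k → Option (Vec d)) (x : Fin (k - 1) → Fin d) :
    Prop :=
  (∀ j : Fin k, (j : ℕ) < k - i → ∀ w, p j = some w →
    ∀ ℓ : Fin (k - 1), (ℓ : ℕ) < k - ((j : ℕ) + 1) → w (x ℓ) = true) ∧
  (∀ j : Fin k, k - i + 2 ≤ (j : ℕ) → ∀ w, p j = some w →
    ∀ ℓ : Fin (k - 1), k - ((j : ℕ) + 1) ≤ (ℓ : ℕ) → w (x ℓ) = true)

/-- The layer `L_i`, for `i = 1, …, k+1`. -/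
def setL (k d : ℕ) (S : Finset (Vec d)) (i : ℕ) : Set (Vert k d) :=
  { w | ∃ p x, w = Vert.node (Tag.L i) p x ∧
      ((i = 1 ∧ FillsS k d S (fun j => j < k - 1) p ∧ ZeroX k d x) ∨
       (i = k + 1 ∧ FillsS k d S (fun j => 1 ≤ j) p ∧ ZeroX k d x) ∨
       (2 ≤ i ∧ i ≤ k ∧ FillsS k d S (fun j => j < k - i ∨ k - i + 2 ≤ j) p ∧
         BitCond k d i p x)) }

/-- The layer `L'_i`, for `i = 3, …, k-1`: same vector tuples as `L_i` but with an
arbitrary coordinate array. -/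
def setL' (k d : ℕ) (S : Finset (Vec d)) (i : ℕ) : Set (Vert k d) :=
  { w | ∃ p x, w = Vert.node (Tag.L' i) p x ∧ 3 ≤ i ∧ i ≤ k - 1 ∧
      FillsS k d S (fun j => j < k - i ∨ k - i + 2 ≤ j) p }

/-- The set `A_i`, for `i = 4, …, k-1`: tuples `(a_1, …, a_{k-i})`. -/
def setA (k d : ℕ) (S : Finset (Vec d)) (i : ℕ) : Set (Vert k d) :=
  { w | ∃ p x, w = Vert.node (Tag.A i) p x ∧ 4 ≤ i ∧ i ≤ k - 1 ∧
      FillsS k d S (fun j => j < k - i) p ∧ ZeroX k d x }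

/-- The set `B_i`, for `i = 3, …, k-2`: tuples `(b_{k-i+3}, …, b_k)`. -/
def setB (k d : ℕ) (S : Finset (Vec d)) (i : ℕ) : Set (Vert k d) :=
  { w | ∃ p x, w = Vert.node (Tag.B i) p x ∧ 3 ≤ i ∧ i ≤ k - 2 ∧
      FillsS k d S (fun j => k - i + 2 ≤ j) p ∧ ZeroX k d x }

/-- `L = ∪_i L_i`. -/
def setLall (k d : ℕ) (S : Finset (Vec d)) : Set (Vert k d) := ⋃ i, setL k d S i

/-- `L' = ∪_i L'_i`. -/
def setL'all (k d : ℕ) (S : Finset (Vec d)) : Set (Vert k d) := ⋃ i, setL' k d S i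

/-- `A = ∪_i A_i`. -/
def setAall (k d : ℕ) (S : Finset (Vec d)) : Set (Vert k d) := ⋃ i, setA k d S i

/-- `B = ∪_i B_i`. -/
def setBall (k d : ℕ) (S : Finset (Vec d)) : Set (Vert k d) := ⋃ i, setB k d S i

/-- Level `i` is `L_i ∪ L'_i ∪ A_i ∪ B_i`. -/
def level (k d : ℕ) (S : Finset (Vec d)) (i : ℕ) : Set (Vert k d) :=
  setL k d S i ∪ setL' k d S i ∪ setA k d S i ∪ setB k d S i

/-- The vertex set of the graph `G`. -/
def VertexSet (k d : ℕ) (S : Finset (Vec d)) : Set (Vert k d) :=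
  setLall k d S ∪ setL'all k d S ∪ setAall k d S ∪ setBall k d S ∪ {Vert.uu, Vert.vv}

/-! ### Edges -/

/-- One orientation of the (undirected) swap edges.  Between `L_i` and `L_{i+1}`
(`2 ≤ i ≤ k-1`) the vector `a_{k-i}` (0-based position `k-i-1`) is exchanged for the
vector `b_{k-i+2}` (0-based position `k-i+1`), keeping the coordinate array; between
`L_1` and `L_2` the vector `a_{k-1}` is exchanged for a coordinate array; between
`L_{k+1}` and `L_k` the vector `b_2` is exchanged for a coordinate array. -/
def SwapE (k d : ℕ) (S : Finset (Vec d)) (α β : Vert k d) : Prop :=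
  (∃ i p x p' x', 2 ≤ i ∧ i ≤ k - 1 ∧
      α = Vert.node (Tag.L i) p x ∧ β = Vert.node (Tag.L (i + 1)) p' x' ∧
      α ∈ setL k d S i ∧ β ∈ setL k d S (i + 1) ∧ x' = x ∧
      (∀ j : Fin k, (j : ℕ) ≠ k - i - 1 → (j : ℕ) ≠ k - i + 1 → p' j = p j)) ∨
  (∃ p x p' x',
      α = Vert.node (Tag.L 1) p x ∧ β = Vert.node (Tag.L 2) p' x' ∧
      α ∈ setL k d S 1 ∧ β ∈ setL k d S 2 ∧
      (∀ j : Fin k, (j : ℕ) ≠ k - 2 → p' j = p j)) ∨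
  (∃ p x p' x',
      α = Vert.node (Tag.L (k + 1)) p x ∧ β = Vert.node (Tag.L k) p' x' ∧
      α ∈ setL k d S (k + 1) ∧ β ∈ setL k d S k ∧
      (∀ j : Fin k, (j : ℕ) ≠ 1 → p' j = p j))

/-- One orientation of the (undirected) vector-change edges between `L_i` and `L'_i`
(`3 ≤ i ≤ k-1`): same coordinate array, same vectors except possibly one of `a_{k-i}`
(position `k-i-1`) or `b_{k-i+3}` (position `k-i+2`). -/
def VecE (k d : ℕ) (S : Finset (Vec d)) (α β : Vert k d) : Prop :=
  ∃ i p x p' x', 3 ≤ i ∧ i ≤ k - 1 ∧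
    α = Vert.node (Tag.L i) p x ∧ β = Vert.node (Tag.L' i) p' x' ∧
    α ∈ setL k d S i ∧ β ∈ setL' k d S i ∧ x' = x ∧
    ((∀ j : Fin k, (j : ℕ) ≠ k - i - 1 → p' j = p j) ∨
     (∀ j : Fin k, (j : ℕ) ≠ k - i + 2 → p' j = p j))

/-- The (undirected, symmetric as stated) coordinate-change edges: two distinct
vertices with the same vector tuple, within each `L'_i`, between `L'_i` and `L_i`,
within `L_2` and within `L_k`. -/
def CoordE (k d : ℕ) (S : Finset (Vec d)) (α β : Vert k d) : Prop :=
  ∃ t t' p x x', α = Vert.node t p x ∧ β = Vert.node t' p x' ∧ α ≠ β ∧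
    ((∃ i, α ∈ setL' k d S i ∧ β ∈ setL' k d S i) ∨
     (∃ i, α ∈ setL' k d S i ∧ β ∈ setL k d S i) ∨
     (∃ i, α ∈ setL k d S i ∧ β ∈ setL' k d S i) ∨
     (α ∈ setL k d S 2 ∧ β ∈ setL k d S 2) ∨
     (α ∈ setL k d S k ∧ β ∈ setL k d S k))

/-- The directed `a`-type back edges: from `L_i ∪ L'_i` to the matching prefix in `A_i`;
from `A_i` to every vertex of `L'_4` with the matching prefix; and from `A_{k-1}`
to every vertex of `A_i` with the same first vector `a_1`. -/
def ABack (k d : ℕ) (S : Finset (Vec d)) (α β : Vert k d) : Prop :=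
  (∃ i t p x p' x', (α ∈ setL k d S i ∨ α ∈ setL' k d S i) ∧ β ∈ setA k d S i ∧
      α = Vert.node t p x ∧ β = Vert.node (Tag.A i) p' x' ∧
      (∀ j : Fin k, (j : ℕ) < k - i → p' j = p j)) ∨
  (∃ i p x p' x', α ∈ setA k d S i ∧ β ∈ setL' k d S 4 ∧
      α = Vert.node (Tag.A i) p x ∧ β = Vert.node (Tag.L' 4) p' x' ∧
      (∀ j : Fin k, (j : ℕ) < k - i → p' j = p j)) ∨
  (∃ i p x p' x', α ∈ setA k d S (k - 1) ∧ β ∈ setA k d S i ∧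
      α = Vert.node (Tag.A (k - 1)) p x ∧ β = Vert.node (Tag.A i) p' x' ∧
      (∀ j : Fin k, (j : ℕ) = 0 → p' j = p j))

/-- The directed `b`-type back edges: from `B_i` to every vertex of `L_i ∪ L'_i` with
the matching suffix; from every vertex of `L'_{k-2}` to the vertex of `B_i` with the
matching suffix; and from `B_i` to the vertex of `B_3` with the same last vector. -/
def BBack (k d : ℕ) (S : Finset (Vec d)) (α β : Vert k d) : Prop :=
  (∃ i t p x p' x', α ∈ setB k d S i ∧ (β ∈ setL k d S i ∨ β ∈ setL' k d S i) ∧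
      α = Vert.node (Tag.B i) p x ∧ β = Vert.node t p' x' ∧
      (∀ j : Fin k, k - i + 2 ≤ (j : ℕ) → p j = p' j)) ∨
  (∃ i p x p' x', α ∈ setL' k d S (k - 2) ∧ β ∈ setB k d S i ∧
      α = Vert.node (Tag.L' (k - 2)) p x ∧ β = Vert.node (Tag.B i) p' x' ∧
      (∀ j : Fin k, k - i + 2 ≤ (j : ℕ) → p' j = p j)) ∨
  (∃ i p x p' x', α ∈ setB k d S i ∧ β ∈ setB k d S 3 ∧
      α = Vert.node (Tag.B i) p x ∧ β = Vert.node (Tag.B 3) p' x' ∧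
      (∀ j : Fin k, (j : ℕ) = k - 1 → p' j = p j))

/-- The directed `ba`-type back edges: from every vertex of `B_i` to every vertex of
`A_i`, for `4 ≤ i ≤ k-2`. -/
def BABack (k d : ℕ) (S : Finset (Vec d)) (α β : Vert k d) : Prop :=
  ∃ i, 4 ≤ i ∧ i ≤ k - 2 ∧ α ∈ setB k d S i ∧ β ∈ setA k d S i

/-- The directed fixed edges: `L'_{k-2} → v`, `v → L_1 ∪ L_2`, `L_k ∪ L_{k+1} → u`,
and `u → L'_4`. -/
def FixedE (k d : ℕ) (S : Finset (Vec d)) (α β : Vert k d) : Prop :=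
  (α ∈ setL' k d S (k - 2) ∧ β = Vert.vv) ∨
  (α = Vert.vv ∧ (β ∈ setL k d S 1 ∨ β ∈ setL k d S 2)) ∨
  ((α ∈ setL k d S k ∨ α ∈ setL k d S (k + 1)) ∧ β = Vert.uu) ∨
  (α = Vert.uu ∧ β ∈ setL' k d S 4)

/-- The adjacency relation of the graph `G` (undirected edges appear in both
directions). -/
def Adj (k d : ℕ) (S : Finset (Vec d)) (α β : Vert k d) : Prop :=
  SwapE k d S α β ∨ SwapE k d S β α ∨ VecE k d S α β ∨ VecE k d S β α ∨
  CoordE k d S α β ∨ ABack k d S α β ∨ BBack k d S α β ∨ BABack k d S α β ∨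
  FixedE k d S α β

/-! ### Loops and covers (Section 5) -/

/-- `t` is the first time at which the walk `P` (of length `n`) visits `L_i`. -/
def FirstVisit (k d : ℕ) (S : Finset (Vec d)) (P : ℕ → Vert k d) (n i t : ℕ) : Prop :=
  t ≤ n ∧ P t ∈ setL k d S i ∧ ∀ s, s < t → P s ∉ setL k d S i

/-- `t` is the last time at which the walk `P` (of length `n`) visits `L_i`. -/
def LastVisit (k d : ℕ) (S : Finset (Vec d)) (P : ℕ → Vert k d) (n i t : ℕ) : Prop :=
  t ≤ n ∧ P t ∈ setL k d S i ∧ ∀ s, t < s → s ≤ n → P s ∉ setL k d S i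

/-- The layer `L_i` is in a loop: the walk `P` visits `L_i` at least twice. -/
def InLoop (k d : ℕ) (S : Finset (Vec d)) (P : ℕ → Vert k d) (n i : ℕ) : Prop :=
  ∃ t1 t2, t1 < t2 ∧ t2 ≤ n ∧ P t1 ∈ setL k d S i ∧ P t2 ∈ setL k d S i

/-- The walk `P` visits `A`. -/
def VisitsA (k d : ℕ) (S : Finset (Vec d)) (P : ℕ → Vert k d) (n : ℕ) : Prop :=
  ∃ t ≤ n, P t ∈ setAall k d S

/-- The walk `P` visits `B`. -/
def VisitsB (k d : ℕ) (S : Finset (Vec d)) (P : ℕ → Vert k d) (n : ℕ) : Prop :=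
  ∃ t ≤ n, P t ∈ setBall k d S

/-- The layer `L_i` covers the layer `L_m` (with respect to the walk `P` of length `n`):
for `3 ≤ i ≤ k-1`, `L_i` covers `L_{i-1}` if `L_{i-1}` is not in a loop, `L_i` is in a
loop, and the first and last vertices of `P` in `L_i` differ in the vector `b_{k-i+3}`
(0-based position `k-i+2`) and in the coordinate array; symmetrically `L_i` covers
`L_{i+1}` using the vector `a_{k-i}` (0-based position `k-i-1`).  Additionally `L_4`
covers both `L_3` and `L_2` if `P` visits `A`, and `L_{k-2}` covers both `L_{k-1}` and
`L_k` if `P` visits `B`. -/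
def Covers (k d : ℕ) (S : Finset (Vec d)) (P : ℕ → Vert k d) (n : ℕ) (i m : ℕ) : Prop :=
  (3 ≤ i ∧ i ≤ k - 1 ∧ m + 1 = i ∧ ¬ InLoop k d S P n m ∧ InLoop k d S P n i ∧
    ∃ t1 t2 p1 x1 p2 x2, FirstVisit k d S P n i t1 ∧ LastVisit k d S P n i t2 ∧
      P t1 = Vert.node (Tag.L i) p1 x1 ∧ P t2 = Vert.node (Tag.L i) p2 x2 ∧
      (∀ j : Fin k, (j : ℕ) = k - i + 2 → p1 j ≠ p2 j) ∧ x1 ≠ x2) ∨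
  (3 ≤ i ∧ i ≤ k - 1 ∧ m = i + 1 ∧ ¬ InLoop k d S P n m ∧ InLoop k d S P n i ∧
    ∃ t1 t2 p1 x1 p2 x2, FirstVisit k d S P n i t1 ∧ LastVisit k d S P n i t2 ∧
      P t1 = Vert.node (Tag.L i) p1 x1 ∧ P t2 = Vert.node (Tag.L i) p2 x2 ∧
      (∀ j : Fin k, (j : ℕ) = k - i - 1 → p1 j ≠ p2 j) ∧ x1 ≠ x2) ∨
  (i = 4 ∧ (m = 3 ∨ m = 2) ∧ VisitsA k d S P n) ∨
  (i = k - 2 ∧ (m = k - 1 ∨ m = k) ∧ VisitsB k d S P n)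


-- AUXSTART
/-! ### Auxiliary development for the NO-case theorem -/

section WalkLemmas

variable {V : Type*} {G : V → V → Prop}

theorem hasWalkLen_trans {m n : ℕ} {a b c : V} (h1 : HasWalkLen G m a b)
    (h2 : HasWalkLen G n b c) : HasWalkLen G (m + n) a c := by
  induction m generalizing a with
  | zero => rw [Nat.zero_add]; exact h1 ▸ h2
  | succ m ih =>
      obtain ⟨w, hw, h1'⟩ := h1
      rw [Nat.succ_add]
      exact ⟨w, hw, ih h1'⟩

theorem distLE_refl (a : V) : DistLE G a a 0 := ⟨0, le_refl _, rfl⟩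

theorem distLE_mono {a b : V} {m m' : ℕ} (hm : m ≤ m') (h : DistLE G a b m) :
    DistLE G a b m' := by
  obtain ⟨n, hn, hw⟩ := h
  exact ⟨n, le_trans hn hm, hw⟩

theorem distLE_trans {a b c : V} {m n : ℕ} (h1 : DistLE G a b m) (h2 : DistLE G b c n) :
    DistLE G a c (m + n) := by
  obtain ⟨m', hm', hw1⟩ := h1
  obtain ⟨n', hn', hw2⟩ := h2
  exact ⟨m' + n', Nat.add_le_add hm' hn', hasWalkLen_trans hw1 hw2⟩

theorem distLE_adj {a b : V} (h : G a b) : DistLE G a b 1 :=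
  ⟨1, le_refl _, b, h, rfl⟩

theorem distLE_cons {a b c : V} {m : ℕ} (h : G a b) (h2 : DistLE G b c m) :
    DistLE G a c (m + 1) := by
  have := distLE_trans (distLE_adj h) h2
  rwa [Nat.add_comm] at this

theorem distLE_snoc {a b c : V} {m : ℕ} (h : DistLE G a b m) (h2 : G b c) :
    DistLE G a c (m + 1) := distLE_trans h (distLE_adj h2)

theorem distLE_step {a b c : V} {m : ℕ} (h : a = b ∨ G a b) (h2 : DistLE G b c m) :
    DistLE G a c (m + 1) := by
  rcases h with rfl | h
  · exact distLE_mono (Nat.le_succ m) h2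
  · exact distLE_cons h h2

theorem distLE_of_eq {a b : V} {m : ℕ} (h : a = b) : DistLE G a b m :=
  h ▸ distLE_mono (Nat.zero_le m) (distLE_refl a)

end WalkLemmas

section Spine

variable {k d : ℕ} {S : Finset (Vec d)}

/-- All values of a tuple of vectors lie in `S`. -/
def InS (S : Finset (Vec d)) (f : Fin k → Vec d) : Prop := ∀ j, f j ∈ S

/-- Extract the vectors of a partial tuple, defaulting to the all-ones vector. -/
def extractP (p : Fin k → Option (Vec d)) : Fin k → Vec d :=
  fun j => (p j).getD (ones d)

theorem extractP_eq {p : Fin k → Option (Vec d)} {j : Fin k} {a : Vec d}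
    (h : p j = some a) : p j = some (extractP p j) := by
  simp [extractP, h]

theorem extractP_inS {F : ℕ → Prop} {p : Fin k → Option (Vec d)}
    (hf : FillsS k d S F p) (hone : ones d ∈ S) : InS S (extractP p) := by
  intro j
  rcases Classical.em (F (j : ℕ)) with hF | hF
  · obtain ⟨a, haS, he⟩ := (hf j).1 hF
    simpa [extractP, he] using haS
  · simp [extractP, (hf j).2 hF, hone]

/-- The master compatibility condition between a pair of full tuples and a
coordinate array. -/
def Mx (k d : ℕ) (aV bV : Fin k → Vec d) (x : Fin (k - 1) → Fin d) : Prop :=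
  ∀ (p : Fin k) (ℓ : Fin (k - 1)),
    ((ℓ : ℕ) < k - ((p : ℕ) + 1) → aV p (x ℓ) = true) ∧
    (k - ((p : ℕ) + 1) ≤ (ℓ : ℕ) → bV p (x ℓ) = true)

theorem masterExists
    (hno : ∀ f : Fin k → Vec d, (∀ j, f j ∈ S) → ∃ x : Fin d, ∀ j, f j x = true)
    {aV bV : Fin k → Vec d} (ha : InS S aV) (hb : InS S bV) :
    ∃ x : Fin (k - 1) → Fin d, Mx k d aV bV x := by
  have key : ∀ ℓ : Fin (k - 1), ∃ xv : Fin d,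
      ∀ p : Fin k, ((ℓ : ℕ) < k - ((p : ℕ) + 1) → aV p xv = true) ∧
        (k - ((p : ℕ) + 1) ≤ (ℓ : ℕ) → bV p xv = true) := by
    intro ℓ
    obtain ⟨xv, hxv⟩ := hno
      (fun p => if (ℓ : ℕ) < k - ((p : ℕ) + 1) then aV p else bV p)
      (fun p => by split <;> [exact ha p; exact hb p])
    refine ⟨xv, fun p => ⟨fun hc => ?_, fun hc => ?_⟩⟩
    · have := hxv p; rwa [if_pos hc] at this
    · have := hxv p; rwa [if_neg (by omega)] at this
  choose x hx using key
  exact ⟨x, fun p ℓ => hx ℓ p⟩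

/-- The spine tuple at level `i`. -/
def pSp (k d : ℕ) (i : ℕ) (aV bV : Fin k → Vec d) : Fin k → Option (Vec d) :=
  fun j => if (j : ℕ) < k - i then some (aV j)
    else if k - i + 2 ≤ (j : ℕ) then some (bV j) else none

/-- The spine vertex `C_i` in `L_i`. -/
def CL (k d : ℕ) (i : ℕ) (aV bV : Fin k → Vec d) (x : Fin (k - 1) → Fin d) : Vert k d :=
  Vert.node (Tag.L i) (pSp k d i aV bV) x

/-- The spine vertex `C'_i` in `L'_i`. -/
def CL' (k d : ℕ) (i : ℕ) (aV bV : Fin k → Vec d) (x : Fin (k - 1) → Fin d) : Vert k d :=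
  Vert.node (Tag.L' i) (pSp k d i aV bV) x

theorem fillsS_pSp {aV bV : Fin k → Vec d} (i : ℕ)
    (ha : InS S aV) (hb : InS S bV) :
    FillsS k d S (fun j => j < k - i ∨ k - i + 2 ≤ j) (pSp k d i aV bV) := by
  intro j
  constructor
  · rintro (h | h)
    · exact ⟨aV j, ha j, by simp [pSp, h]⟩
    · refine ⟨bV j, hb j, ?_⟩
      simp only [pSp]
      rw [if_neg (by omega), if_pos h]
  · intro h
    have h1 : ¬ ((j:ℕ) < k - i) := fun hh => h (Or.inl hh)
    have h2 : ¬ (k - i + 2 ≤ (j:ℕ)) := fun hh => h (Or.inr hh)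
    simp only [pSp]
    rw [if_neg h1, if_neg h2]

theorem bitCond_pSp {aV bV : Fin k → Vec d} {x : Fin (k-1) → Fin d} (i : ℕ)
    (hx : Mx k d aV bV x) : BitCond k d i (pSp k d i aV bV) x := by
  constructor
  · intro j hj w hw ℓ hℓ
    have : pSp k d i aV bV j = some (aV j) := by simp [pSp, hj]
    rw [this] at hw
    cases hw
    exact (hx j ℓ).1 hℓ
  · intro j hj w hw ℓ hℓ
    have : pSp k d i aV bV j = some (bV j) := by
      simp only [pSp]
      rw [if_neg (by omega), if_pos (by omega)]
    rw [this] at hw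
    cases hw
    exact (hx j ℓ).2 hℓ

theorem memL_sp {aV bV : Fin k → Vec d} {x : Fin (k-1) → Fin d} {i : ℕ}
    (h2 : 2 ≤ i) (hik : i ≤ k) (ha : InS S aV) (hb : InS S bV)
    (hx : Mx k d aV bV x) : CL k d i aV bV x ∈ setL k d S i := by
  exact ⟨pSp k d i aV bV, x, rfl,
    Or.inr (Or.inr ⟨h2, hik, fillsS_pSp i ha hb, bitCond_pSp i hx⟩)⟩

theorem memL'_sp {aV bV : Fin k → Vec d} {x : Fin (k-1) → Fin d} {i : ℕ}
    (h3 : 3 ≤ i) (hik : i ≤ k - 1) (ha : InS S aV) (hb : InS S bV) :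
    CL' k d i aV bV x ∈ setL' k d S i := by
  exact ⟨pSp k d i aV bV, x, rfl, h3, hik, fillsS_pSp i ha hb⟩

end Spine


theorem adj_of_swapE {k d : ℕ} {S : Finset (Vec d)} {a b : Vert k d}
    (h : SwapE k d S a b) : Adj k d S a b := Or.inl h
theorem adj_of_swapE' {k d : ℕ} {S : Finset (Vec d)} {a b : Vert k d}
    (h : SwapE k d S b a) : Adj k d S a b := Or.inr (Or.inl h)
theorem adj_of_vecE {k d : ℕ} {S : Finset (Vec d)} {a b : Vert k d}
    (h : VecE k d S a b) : Adj k d S a b := Or.inr (Or.inr (Or.inl h))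
theorem adj_of_vecE' {k d : ℕ} {S : Finset (Vec d)} {a b : Vert k d}
    (h : VecE k d S b a) : Adj k d S a b := Or.inr (Or.inr (Or.inr (Or.inl h)))
theorem adj_of_coordE {k d : ℕ} {S : Finset (Vec d)} {a b : Vert k d}
    (h : CoordE k d S a b) : Adj k d S a b :=
  Or.inr (Or.inr (Or.inr (Or.inr (Or.inl h))))
theorem adj_of_aback {k d : ℕ} {S : Finset (Vec d)} {a b : Vert k d}
    (h : ABack k d S a b) : Adj k d S a b :=
  Or.inr (Or.inr (Or.inr (Or.inr (Or.inr (Or.inl h)))))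
theorem adj_of_bback {k d : ℕ} {S : Finset (Vec d)} {a b : Vert k d}
    (h : BBack k d S a b) : Adj k d S a b :=
  Or.inr (Or.inr (Or.inr (Or.inr (Or.inr (Or.inr (Or.inl h))))))
theorem adj_of_baback {k d : ℕ} {S : Finset (Vec d)} {a b : Vert k d}
    (h : BABack k d S a b) : Adj k d S a b :=
  Or.inr (Or.inr (Or.inr (Or.inr (Or.inr (Or.inr (Or.inr (Or.inl h)))))))
theorem adj_of_fixedE {k d : ℕ} {S : Finset (Vec d)} {a b : Vert k d}
    (h : FixedE k d S a b) : Adj k d S a b :=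
  Or.inr (Or.inr (Or.inr (Or.inr (Or.inr (Or.inr (Or.inr (Or.inr h)))))))

section Edges

variable {k d : ℕ} {S : Finset (Vec d)} {aV bV : Fin k → Vec d} {x : Fin (k-1) → Fin d}

theorem swapE_sp (i : ℕ) (h2 : 2 ≤ i) (hik : i + 1 ≤ k)
    (ha : InS S aV) (hb : InS S bV) (hx : Mx k d aV bV x) :
    SwapE k d S (CL k d i aV bV x) (CL k d (i+1) aV bV x) := by
  refine Or.inl ⟨i, pSp k d i aV bV, x, pSp k d (i+1) aV bV, x, h2, by omega,
    rfl, rfl, memL_sp h2 (by omega) ha hb hx, memL_sp (by omega) (by omega) ha hb hx,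
    rfl, ?_⟩
  intro j hj1 hj2
  have hjk := j.isLt
  simp only [pSp]
  split_ifs <;> first | rfl | omega

theorem adj_up (i : ℕ) (h2 : 2 ≤ i) (hik : i + 1 ≤ k)
    (ha : InS S aV) (hb : InS S bV) (hx : Mx k d aV bV x) :
    Adj k d S (CL k d i aV bV x) (CL k d (i+1) aV bV x) :=
  Or.inl (swapE_sp i h2 hik ha hb hx)

theorem adj_down (i : ℕ) (h2 : 2 ≤ i) (hik : i + 1 ≤ k)
    (ha : InS S aV) (hb : InS S bV) (hx : Mx k d aV bV x) :
    Adj k d S (CL k d (i+1) aV bV x) (CL k d i aV bV x) :=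
  Or.inr (Or.inl (swapE_sp i h2 hik ha hb hx))

theorem spine_up (s : ℕ) (h2 : 2 ≤ s)
    (ha : InS S aV) (hb : InS S bV) (hx : Mx k d aV bV x) :
    ∀ e, s ≤ e → e ≤ k →
      DistLE (Adj k d S) (CL k d s aV bV x) (CL k d e aV bV x) (e - s) := by
  intro e he
  induction e, he using Nat.le_induction with
  | base => intro _; exact distLE_of_eq rfl
  | succ e hse ih =>
      intro hek
      have h1 : (e + 1) - s = (e - s) + 1 := by omega
      rw [h1]
      exact distLE_snoc (ih (by omega)) (adj_up e (by omega) hek ha hb hx)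

theorem spine_down (s : ℕ) (h2 : 2 ≤ s)
    (ha : InS S aV) (hb : InS S bV) (hx : Mx k d aV bV x) :
    ∀ e, s ≤ e → e ≤ k →
      DistLE (Adj k d S) (CL k d e aV bV x) (CL k d s aV bV x) (e - s) := by
  intro e he
  induction e, he using Nat.le_induction with
  | base => intro _; exact distLE_of_eq rfl
  | succ e hse ih =>
      intro hek
      have h1 : (e + 1) - s = (e - s) + 1 := by omega
      rw [h1]
      exact distLE_cons (adj_down e (by omega) hek ha hb hx) (ih (by omega))

/-- Move along the spine from level `s` to level `e` (both in `[2,k]`). -/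
theorem spine_move (s e : ℕ) (h2 : 2 ≤ s) (h2' : 2 ≤ e) (hsk : s ≤ k) (hek : e ≤ k)
    (ha : InS S aV) (hb : InS S bV) (hx : Mx k d aV bV x) {m : ℕ}
    (hm : e - s ≤ m ∧ s - e ≤ m) :
    DistLE (Adj k d S) (CL k d s aV bV x) (CL k d e aV bV x) m := by
  rcases Nat.le_total s e with h | h
  · exact distLE_mono hm.1 (spine_up s h2 ha hb hx e h hek)
  · exact distLE_mono hm.2 (spine_down e h2' ha hb hx s h hsk)

theorem node_LL'_ne {i i' : ℕ} {p p' : Fin k → Option (Vec d)}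
    {y y' : Fin (k-1) → Fin d} :
    (Vert.node (Tag.L i) p y : Vert k d) ≠ Vert.node (Tag.L' i') p' y' := by
  intro h
  injection h with h1 _
  exact Tag.noConfusion h1

/-- `CoordE` step from `C_i` to an `L'_i` vertex with the same tuple and arbitrary
coordinate array. -/
theorem coordE_L_L' (i : ℕ) (h3 : 3 ≤ i) (hik : i ≤ k - 1)
    (ha : InS S aV) (hb : InS S bV) (hx : Mx k d aV bV x)
    (x' : Fin (k-1) → Fin d) :
    CoordE k d S (CL k d i aV bV x) (CL' k d i aV bV x') :=
  ⟨Tag.L i, Tag.L' i, pSp k d i aV bV, x, x', rfl, rfl, node_LL'_ne,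
    Or.inr (Or.inr (Or.inl ⟨i, memL_sp (by omega) (by omega) ha hb hx,
      memL'_sp h3 hik ha hb⟩))⟩

theorem coordE_L'_L (i : ℕ) (h3 : 3 ≤ i) (hik : i ≤ k - 1)
    (ha : InS S aV) (hb : InS S bV) (hx : Mx k d aV bV x)
    (x' : Fin (k-1) → Fin d) :
    CoordE k d S (CL' k d i aV bV x') (CL k d i aV bV x) :=
  ⟨Tag.L' i, Tag.L i, pSp k d i aV bV, x', x, rfl, rfl, node_LL'_ne.symm,
    Or.inr (Or.inl ⟨i, memL'_sp h3 hik ha hb,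
      memL_sp (by omega) (by omega) ha hb hx⟩)⟩

theorem adj_L_L' (i : ℕ) (h3 : 3 ≤ i) (hik : i ≤ k - 1)
    (ha : InS S aV) (hb : InS S bV) (hx : Mx k d aV bV x)
    (x' : Fin (k-1) → Fin d) :
    Adj k d S (CL k d i aV bV x) (CL' k d i aV bV x') :=
  adj_of_coordE (coordE_L_L' i h3 hik ha hb hx x')

theorem adj_L'_L (i : ℕ) (h3 : 3 ≤ i) (hik : i ≤ k - 1)
    (ha : InS S aV) (hb : InS S bV) (hx : Mx k d aV bV x)
    (x' : Fin (k-1) → Fin d) :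
    Adj k d S (CL' k d i aV bV x') (CL k d i aV bV x) :=
  adj_of_coordE (coordE_L'_L i h3 hik ha hb hx x')

end Edges

section MemExtract

variable {k d : ℕ} {S : Finset (Vec d)}

theorem setL1_elim {p : Fin k → Option (Vec d)} {xα : Fin (k-1) → Fin d} (hk : 5 ≤ k)
    (hmem : Vert.node (Tag.L 1) p xα ∈ setL k d S 1) :
    FillsS k d S (fun j => j < k - 1) p ∧ ZeroX k d xα := by
  obtain ⟨p', x', he, hcase⟩ := hmem
  injection he with h1 h2 h3
  subst h2; subst h3
  rcases hcase with ⟨_, hf, hz⟩ | ⟨hc, _⟩ | ⟨hc, _⟩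
  · exact ⟨hf, hz⟩
  · omega
  · omega

theorem setLtop_elim {p : Fin k → Option (Vec d)} {xα : Fin (k-1) → Fin d} (hk : 5 ≤ k)
    (hmem : Vert.node (Tag.L (k+1)) p xα ∈ setL k d S (k+1)) :
    FillsS k d S (fun j => 1 ≤ j) p ∧ ZeroX k d xα := by
  obtain ⟨p', x', he, hcase⟩ := hmem
  injection he with h1 h2 h3
  subst h2; subst h3
  injection h1 with h1
  rcases hcase with ⟨hc, _⟩ | ⟨_, hf, hz⟩ | ⟨_, hc, _⟩
  · omega
  · exact ⟨hf, hz⟩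
  · omega

theorem setLmid_elim {i : ℕ} {p : Fin k → Option (Vec d)} {xα : Fin (k-1) → Fin d}
    (h2 : 2 ≤ i) (hik : i ≤ k)
    (hmem : Vert.node (Tag.L i) p xα ∈ setL k d S i) :
    FillsS k d S (fun j => j < k - i ∨ k - i + 2 ≤ j) p ∧ BitCond k d i p xα := by
  obtain ⟨p', x', he, hcase⟩ := hmem
  injection he with h1 h2' h3
  subst h2'; subst h3
  injection h1 with h1
  rcases hcase with ⟨hc, _⟩ | ⟨hc, _⟩ | ⟨_, _, hf, hb⟩
  · omega
  · omega
  · exact ⟨hf, hb⟩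

theorem setL'_elim {i : ℕ} {p : Fin k → Option (Vec d)} {xα : Fin (k-1) → Fin d}
    (hmem : Vert.node (Tag.L' i) p xα ∈ setL' k d S i) :
    3 ≤ i ∧ i ≤ k - 1 ∧ FillsS k d S (fun j => j < k - i ∨ k - i + 2 ≤ j) p := by
  obtain ⟨p', x', he, h3, hik, hf⟩ := hmem
  injection he with h1 h2' h3'
  subst h2'; subst h3'
  exact ⟨h3, hik, hf⟩

theorem setA_elim {i : ℕ} {p : Fin k → Option (Vec d)} {xα : Fin (k-1) → Fin d}
    (hmem : Vert.node (Tag.A i) p xα ∈ setA k d S i) :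
    4 ≤ i ∧ i ≤ k - 1 ∧ FillsS k d S (fun j => j < k - i) p ∧ ZeroX k d xα := by
  obtain ⟨p', x', he, h4, hik, hf, hz⟩ := hmem
  injection he with h1 h2' h3'
  subst h2'; subst h3'
  exact ⟨h4, hik, hf, hz⟩

theorem setB_elim {i : ℕ} {p : Fin k → Option (Vec d)} {xα : Fin (k-1) → Fin d}
    (hmem : Vert.node (Tag.B i) p xα ∈ setB k d S i) :
    3 ≤ i ∧ i ≤ k - 2 ∧ FillsS k d S (fun j => k - i + 2 ≤ j) p ∧ ZeroX k d xα := by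
  obtain ⟨p', x', he, h3, hik, hf, hz⟩ := hmem
  injection he with h1 h2' h3'
  subst h2'; subst h3'
  exact ⟨h3, hik, hf, hz⟩

theorem p_eq_pSp {i : ℕ} {p : Fin k → Option (Vec d)} {aV bV : Fin k → Vec d}
    (hf : FillsS k d S (fun j => j < k - i ∨ k - i + 2 ≤ j) p)
    (hma : ∀ j : Fin k, (j:ℕ) < k - i → p j = some (aV j))
    (hmb : ∀ j : Fin k, k - i + 2 ≤ (j:ℕ) → p j = some (bV j)) :
    p = pSp k d i aV bV := by
  funext j
  by_cases h1 : (j:ℕ) < k - i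
  · rw [hma j h1]; simp [pSp, h1]
  · by_cases h2 : k - i + 2 ≤ (j:ℕ)
    · rw [hmb j h2]; simp only [pSp]; rw [if_neg h1, if_pos h2]
    · rw [(hf j).2 (by tauto)]; simp only [pSp]; rw [if_neg h1, if_neg h2]

theorem node_ne_x {t : Tag} {p : Fin k → Option (Vec d)} {y y' : Fin (k-1) → Fin d}
    (h : y ≠ y') : (Vert.node t p y : Vert k d) ≠ Vert.node t p y' := by
  intro he
  injection he with _ _ h3
  exact h h3

end MemExtract

section Joins

variable {k d : ℕ} {S : Finset (Vec d)} {aV bV : Fin k → Vec d} {x : Fin (k-1) → Fin d}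
variable {p : Fin k → Option (Vec d)} {xα : Fin (k-1) → Fin d}

/-- Join from `L_1` to `C_2`. -/
theorem joinL1 (hk : 5 ≤ k)
    (ha : InS S aV) (hb : InS S bV) (hx : Mx k d aV bV x)
    (hmem : Vert.node (Tag.L 1) p xα ∈ setL k d S 1)
    (hm : ∀ j : Fin k, (j:ℕ) < k - 2 → p j = some (aV j)) :
    DistLE (Adj k d S) (Vert.node (Tag.L 1) p xα) (CL k d 2 aV bV x) 1 := by
  refine distLE_adj (adj_of_swapE (Or.inr (Or.inl ⟨p, xα, pSp k d 2 aV bV, x, rfl, rfl,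
    hmem, memL_sp (le_refl 2) (by omega) ha hb hx, ?_⟩)))
  intro j hj
  have hjk := j.isLt
  by_cases h1 : (j:ℕ) < k - 2
  · simp only [pSp]; rw [if_pos h1, hm j h1]
  · have : ¬ ((j:ℕ) < k - 1) := by omega
    rw [((setL1_elim hk hmem).1 j).2 this]
    simp only [pSp]; rw [if_neg h1, if_neg (by omega)]

/-- Join from `L_2` to `C_2`. -/
theorem joinL2 (hk : 5 ≤ k)
    (ha : InS S aV) (hb : InS S bV) (hx : Mx k d aV bV x)
    (hmem : Vert.node (Tag.L 2) p xα ∈ setL k d S 2)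
    (hm : ∀ j : Fin k, (j:ℕ) < k - 2 → p j = some (aV j)) :
    DistLE (Adj k d S) (Vert.node (Tag.L 2) p xα) (CL k d 2 aV bV x) 1 := by
  have hf := (setLmid_elim (le_refl 2) (by omega) hmem).1
  have hp : p = pSp k d 2 aV bV :=
    p_eq_pSp hf hm (fun j hj => absurd j.isLt (by omega))
  subst hp
  refine distLE_step ?_ (distLE_refl _)
  by_cases hxe : xα = x
  · exact Or.inl (by rw [hxe]; rfl)
  · refine Or.inr (adj_of_coordE
      ⟨Tag.L 2, Tag.L 2, pSp k d 2 aV bV, xα, x, rfl, rfl, node_ne_x hxe,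
        Or.inr (Or.inr (Or.inr (Or.inl
          ⟨hmem, memL_sp (le_refl 2) (by omega) ha hb hx⟩)))⟩)

/-- Join from `L_3` to `C_3` (the vector `b_k` is shed, `bV` is unconstrained). -/
theorem joinL3 (hk : 5 ≤ k)
    (ha : InS S aV) (hb : InS S bV) (hx : Mx k d aV bV x)
    (hmem : Vert.node (Tag.L 3) p xα ∈ setL k d S 3)
    (hm : ∀ j : Fin k, (j:ℕ) < k - 3 → p j = some (aV j)) :
    DistLE (Adj k d S) (Vert.node (Tag.L 3) p xα) (CL k d 3 aV bV x) 2 := by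
  have hf := (setLmid_elim (by omega) (by omega) hmem).1
  have memW : Vert.node (Tag.L' 3) p x ∈ setL' k d S 3 := by
    refine ⟨p, x, rfl, le_refl 3, by omega, hf⟩
  have step1 : Adj k d S (Vert.node (Tag.L 3) p xα) (Vert.node (Tag.L' 3) p x) :=
    adj_of_coordE ⟨Tag.L 3, Tag.L' 3, p, xα, x, rfl, rfl, node_LL'_ne,
        Or.inr (Or.inr (Or.inl ⟨3, hmem, memW⟩))⟩
  have step2 : Adj k d S (Vert.node (Tag.L' 3) p x) (CL k d 3 aV bV x) := by
    refine adj_of_vecE'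
      ⟨3, pSp k d 3 aV bV, x, p, x, le_refl 3, by omega, rfl, rfl,
        memL_sp (by omega) (by omega) ha hb hx, memW, rfl, Or.inr ?_⟩
    intro j hj
    have hjk := j.isLt
    by_cases h1 : (j:ℕ) < k - 3
    · rw [hm j h1]; simp only [pSp]; rw [if_pos h1]
    · rw [(hf j).2 (by omega)]
      simp only [pSp]; rw [if_neg h1, if_neg (by omega)]
  exact distLE_cons step1 (distLE_cons step2 (distLE_refl _))

/-- Join from `L'_3` to `C_3`. -/
theorem joinL'3 (hk : 5 ≤ k)
    (ha : InS S aV) (hb : InS S bV) (hx : Mx k d aV bV x)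
    (hmem : Vert.node (Tag.L' 3) p xα ∈ setL' k d S 3)
    (hm : ∀ j : Fin k, (j:ℕ) < k - 3 → p j = some (aV j)) :
    DistLE (Adj k d S) (Vert.node (Tag.L' 3) p xα) (CL k d 3 aV bV x) 2 := by
  have hf := (setL'_elim hmem).2.2
  have memW : Vert.node (Tag.L' 3) p x ∈ setL' k d S 3 := ⟨p, x, rfl, le_refl 3, by omega, hf⟩
  have step1 : (Vert.node (Tag.L' 3) p xα) = (Vert.node (Tag.L' 3) p x) ∨
      Adj k d S (Vert.node (Tag.L' 3) p xα) (Vert.node (Tag.L' 3) p x) := by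
    by_cases hxe : xα = x
    · exact Or.inl (by rw [hxe])
    · exact Or.inr (adj_of_coordE
        ⟨Tag.L' 3, Tag.L' 3, p, xα, x, rfl, rfl, node_ne_x hxe,
          Or.inl ⟨3, hmem, memW⟩⟩)
  have step2 : Adj k d S (Vert.node (Tag.L' 3) p x) (CL k d 3 aV bV x) := by
    refine adj_of_vecE'
      ⟨3, pSp k d 3 aV bV, x, p, x, le_refl 3, by omega, rfl, rfl,
        memL_sp (by omega) (by omega) ha hb hx, memW, rfl, Or.inr ?_⟩
    intro j hj
    have hjk := j.isLt
    by_cases h1 : (j:ℕ) < k - 3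
    · rw [hm j h1]; simp only [pSp]; rw [if_pos h1]
    · rw [(hf j).2 (by omega)]
      simp only [pSp]; rw [if_neg h1, if_neg (by omega)]
  exact distLE_step step1 (distLE_cons step2 (distLE_refl _))
end Joins

section Joins2

variable {k d : ℕ} {S : Finset (Vec d)} {aV bV : Fin k → Vec d} {x : Fin (k-1) → Fin d}
variable {p : Fin k → Option (Vec d)} {xα : Fin (k-1) → Fin d}

/-- The `A_i` vertex with prefix taken from `p`. -/
def pASp (k d : ℕ) (i : ℕ) (p : Fin k → Option (Vec d)) : Fin k → Option (Vec d) :=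
  fun j => if (j:ℕ) < k - i then p j else none

def zx (k : ℕ) {d : ℕ} (hd : 0 < d) : Fin (k-1) → Fin d := fun _ => ⟨0, hd⟩

theorem zeroX_zx {hd : 0 < d} : ZeroX k d (zx k hd) := fun _ => rfl

theorem memA_pASp {i : ℕ} (hd : 0 < d) (h4 : 4 ≤ i) (hik : i ≤ k - 1)
    (hf : ∀ j : Fin k, (j:ℕ) < k - i → ∃ a ∈ S, p j = some a) :
    Vert.node (Tag.A i) (pASp k d i p) (zx k hd) ∈ setA k d S i := by
  refine ⟨pASp k d i p, zx k hd, rfl, h4, hik, ?_, zeroX_zx⟩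
  intro j
  constructor
  · intro hj
    obtain ⟨a, haS, he⟩ := hf j hj
    exact ⟨a, haS, by simp only [pASp]; rw [if_pos hj]; exact he⟩
  · intro hj; simp only [pASp]; rw [if_neg hj]

/-- Join from `L_i ∪ L'_i` (`4 ≤ i ≤ k-1`) to `C_4` via `A_i`; `bV` unconstrained. -/
theorem joinLmid (hk : 5 ≤ k) (hd : 0 < d) {i : ℕ} (h4 : 4 ≤ i) (hik : i ≤ k - 1)
    {tg : Tag}
    (ha : InS S aV) (hb : InS S bV) (hx : Mx k d aV bV x)
    (hor : Vert.node tg p xα ∈ setL k d S i ∨ Vert.node tg p xα ∈ setL' k d S i)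
    (hfa : ∀ j : Fin k, (j:ℕ) < k - i → ∃ a ∈ S, p j = some a)
    (hm : ∀ j : Fin k, (j:ℕ) < k - i → p j = some (aV j)) :
    DistLE (Adj k d S) (Vert.node tg p xα) (CL k d 4 aV bV x) 3 := by
  have memAv := memA_pASp (S := S) hd h4 hik hfa
  have step1 : Adj k d S (Vert.node tg p xα) (Vert.node (Tag.A i) (pASp k d i p) (zx k hd)) := by
    refine adj_of_aback (Or.inl
      ⟨i, tg, p, xα, pASp k d i p, zx k hd, hor, memAv, rfl, rfl, ?_⟩)
    intro j hj
    simp only [pASp]; rw [if_pos hj]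
  have step2 : Adj k d S (Vert.node (Tag.A i) (pASp k d i p) (zx k hd))
      (CL' k d 4 aV bV x) := by
    refine adj_of_aback (Or.inr (Or.inl
      ⟨i, pASp k d i p, zx k hd, pSp k d 4 aV bV, x, memAv,
        memL'_sp (by omega) (by omega) ha hb, rfl, rfl, ?_⟩))
    intro j hj
    simp only [pASp, pSp]
    rw [if_pos hj, if_pos (by omega), hm j hj]
  exact distLE_cons step1 (distLE_cons step2
    (distLE_cons (adj_L'_L 4 (by omega) (by omega) ha hb hx x) (distLE_refl _)))

/-- Join from `A_i` to `C_4`; `bV` unconstrained. -/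
theorem joinA (hk : 5 ≤ k) {i : ℕ} (h4 : 4 ≤ i) (hik : i ≤ k - 1)
    (ha : InS S aV) (hb : InS S bV) (hx : Mx k d aV bV x)
    (hmem : Vert.node (Tag.A i) p xα ∈ setA k d S i)
    (hm : ∀ j : Fin k, (j:ℕ) < k - i → p j = some (aV j)) :
    DistLE (Adj k d S) (Vert.node (Tag.A i) p xα) (CL k d 4 aV bV x) 2 := by
  have step1 : Adj k d S (Vert.node (Tag.A i) p xα) (CL' k d 4 aV bV x) := by
    refine adj_of_aback (Or.inr (Or.inl
      ⟨i, p, xα, pSp k d 4 aV bV, x, hmem,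
        memL'_sp (by omega) (by omega) ha hb, rfl, rfl, ?_⟩))
    intro j hj
    simp only [pSp]
    rw [if_pos (by omega), hm j hj]
  exact distLE_cons step1
    (distLE_cons (adj_L'_L 4 (by omega) (by omega) ha hb hx x) (distLE_refl _))

/-- Join from `B_i` (`4 ≤ i ≤ k-2`) to `C_4`; fully unconstrained. -/
theorem joinBmid (hk : 5 ≤ k) (hd : 0 < d) {i : ℕ} (h4 : 4 ≤ i) (hik : i ≤ k - 2)
    (ha : InS S aV) (hb : InS S bV) (hx : Mx k d aV bV x)
    (hmem : Vert.node (Tag.B i) p xα ∈ setB k d S i) :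
    DistLE (Adj k d S) (Vert.node (Tag.B i) p xα) (CL k d 4 aV bV x) 3 := by
  have memAv : Vert.node (Tag.A i) (pASp k d i (pSp k d i aV bV)) (zx k hd) ∈
      setA k d S i := by
    refine memA_pASp hd h4 (by omega) ?_
    intro j hj
    exact ⟨aV j, ha j, by simp [pSp, hj]⟩
  have step1 : Adj k d S (Vert.node (Tag.B i) p xα)
      (Vert.node (Tag.A i) (pASp k d i (pSp k d i aV bV)) (zx k hd)) :=
    adj_of_baback ⟨i, h4, hik, hmem, memAv⟩
  have step2 : Adj k d S (Vert.node (Tag.A i) (pASp k d i (pSp k d i aV bV)) (zx k hd))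
      (CL' k d 4 aV bV x) := by
    refine adj_of_aback (Or.inr (Or.inl
      ⟨i, _, zx k hd, pSp k d 4 aV bV, x, memAv,
        memL'_sp (by omega) (by omega) ha hb, rfl, rfl, ?_⟩))
    intro j hj
    simp only [pASp, pSp]
    rw [if_pos (by omega), if_pos hj, if_pos hj]
  exact distLE_cons step1 (distLE_cons step2
    (distLE_cons (adj_L'_L 4 (by omega) (by omega) ha hb hx x) (distLE_refl _)))

/-- Join from `B_3` to `C_3`; fully unconstrained. -/
theorem joinB3 (hk : 5 ≤ k)
    (ha : InS S aV) (hb : InS S bV) (hx : Mx k d aV bV x)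
    (hmem : Vert.node (Tag.B 3) p xα ∈ setB k d S 3) :
    DistLE (Adj k d S) (Vert.node (Tag.B 3) p xα) (CL k d 3 aV bV x) 2 := by
  obtain ⟨_, _, hf, _⟩ := setB_elim hmem
  set pW : Fin k → Option (Vec d) :=
    fun j => if (j:ℕ) = k - 1 then p j else pSp k d 3 aV bV j with hpW
  have memW : Vert.node (Tag.L' 3) pW x ∈ setL' k d S 3 := by
    refine ⟨pW, x, rfl, le_refl 3, by omega, ?_⟩
    intro j
    have hjk := j.isLt
    constructor
    · rintro (hj | hj)
      · refine ⟨aV j, ha j, ?_⟩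
        simp only [hpW, pSp]
        rw [if_neg (by omega), if_pos hj]
      · have hj1 : (j:ℕ) = k - 1 := by omega
        obtain ⟨a, haS, he⟩ := (hf j).1 (by omega)
        exact ⟨a, haS, by simp only [hpW]; rw [if_pos hj1]; exact he⟩
    · intro hj
      have h1 : ¬ ((j:ℕ) < k - 3) := fun hh => hj (Or.inl hh)
      have h2 : ¬ (k - 3 + 2 ≤ (j:ℕ)) := fun hh => hj (Or.inr hh)
      simp only [hpW, pSp]
      rw [if_neg (by omega), if_neg h1, if_neg h2]
  have step1 : Adj k d S (Vert.node (Tag.B 3) p xα) (Vert.node (Tag.L' 3) pW x) := by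
    refine adj_of_bback (Or.inl
      ⟨3, Tag.L' 3, p, xα, pW, x, hmem, Or.inr memW, rfl, rfl, ?_⟩)
    intro j hj
    have hjk := j.isLt
    simp only [hpW]; rw [if_pos (by omega)]
  have step2 : Adj k d S (Vert.node (Tag.L' 3) pW x) (CL k d 3 aV bV x) := by
    refine adj_of_vecE'
      ⟨3, pSp k d 3 aV bV, x, pW, x, le_refl 3, by omega, rfl, rfl,
        memL_sp (by omega) (by omega) ha hb hx, memW, rfl, Or.inr ?_⟩
    intro j hj
    simp only [hpW]; rw [if_neg (by omega)]
  exact distLE_cons step1 (distLE_cons step2 (distLE_refl _))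

/-- Join from `u` to `C_4`. -/
theorem joinU (hk : 5 ≤ k)
    (ha : InS S aV) (hb : InS S bV) (hx : Mx k d aV bV x) :
    DistLE (Adj k d S) (Vert.uu : Vert k d) (CL k d 4 aV bV x) 2 := by
  have step1 : Adj k d S (Vert.uu : Vert k d) (CL' k d 4 aV bV x) :=
    adj_of_fixedE (Or.inr (Or.inr (Or.inr
      ⟨rfl, memL'_sp (by omega) (by omega) ha hb⟩)))
  exact distLE_cons step1
    (distLE_cons (adj_L'_L 4 (by omega) (by omega) ha hb hx x) (distLE_refl _))

/-- Join from `v` to `C_2`. -/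
theorem joinV (hk : 5 ≤ k)
    (ha : InS S aV) (hb : InS S bV) (hx : Mx k d aV bV x) :
    DistLE (Adj k d S) (Vert.vv : Vert k d) (CL k d 2 aV bV x) 1 := by
  exact distLE_adj (adj_of_fixedE (Or.inr (Or.inl
    ⟨rfl, Or.inr (memL_sp (le_refl 2) (by omega) ha hb hx)⟩)))

/-- Join from `L_k ∪ L_{k+1}` to `C_4` via `u`; fully unconstrained. -/
theorem joinViaU (hk : 5 ≤ k) {α : Vert k d}
    (ha : InS S aV) (hb : InS S bV) (hx : Mx k d aV bV x)
    (hmem : α ∈ setL k d S k ∨ α ∈ setL k d S (k+1)) :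
    DistLE (Adj k d S) α (CL k d 4 aV bV x) 3 := by
  have step1 : Adj k d S α (Vert.uu : Vert k d) :=
    adj_of_fixedE (Or.inr (Or.inr (Or.inl ⟨hmem, rfl⟩)))
  exact distLE_cons step1 (joinU hk ha hb hx)

/-- Join from `L_k` at its own level, `bV` must extend `α`'s vectors. -/
theorem joinLk (hk : 5 ≤ k)
    (ha : InS S aV) (hb : InS S bV) (hx : Mx k d aV bV x)
    (hmem : Vert.node (Tag.L k) p xα ∈ setL k d S k)
    (hm : ∀ j : Fin k, 2 ≤ (j:ℕ) → p j = some (bV j)) :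
    DistLE (Adj k d S) (Vert.node (Tag.L k) p xα) (CL k d k aV bV x) 1 := by
  have hf := (setLmid_elim (by omega) (le_refl k) hmem).1
  have hp : p = pSp k d k aV bV := by
    refine p_eq_pSp hf (fun j hj => absurd hj (by omega)) (fun j hj => hm j (by omega))
  subst hp
  refine distLE_step ?_ (distLE_refl _)
  by_cases hxe : xα = x
  · exact Or.inl (by rw [hxe]; rfl)
  · exact Or.inr (adj_of_coordE
      ⟨Tag.L k, Tag.L k, pSp k d k aV bV, xα, x, rfl, rfl, node_ne_x hxe,
        Or.inr (Or.inr (Or.inr (Or.inr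
          ⟨hmem, memL_sp (by omega) (le_refl k) ha hb hx⟩)))⟩)

/-- Join from `L_{k+1}` to `C_k` by a swap; `aV` and `x` unconstrained. -/
theorem joinLtop (hk : 5 ≤ k)
    (ha : InS S aV) (hb : InS S bV) (hx : Mx k d aV bV x)
    (hmem : Vert.node (Tag.L (k+1)) p xα ∈ setL k d S (k+1))
    (hm : ∀ j : Fin k, 2 ≤ (j:ℕ) → p j = some (bV j)) :
    DistLE (Adj k d S) (Vert.node (Tag.L (k+1)) p xα) (CL k d k aV bV x) 1 := by
  refine distLE_adj (adj_of_swapE (Or.inr (Or.inr ⟨p, xα, pSp k d k aV bV, x, rfl, rfl,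
    hmem, memL_sp (by omega) (le_refl k) ha hb hx, ?_⟩)))
  intro j hj
  have hjk := j.isLt
  by_cases h2 : 2 ≤ (j:ℕ)
  · simp only [pSp]
    rw [if_neg (by omega), if_pos (by omega), hm j h2]
  · have h0 : (j:ℕ) = 0 := by omega
    rw [((setLtop_elim hk hmem).1 j).2 (by omega)]
    simp only [pSp]
    rw [if_neg (by omega), if_neg (by omega)]

end Joins2

section Joins3

variable {k d : ℕ} {S : Finset (Vec d)} {aV bV : Fin k → Vec d} {x : Fin (k-1) → Fin d}
variable {p : Fin k → Option (Vec d)} {xα : Fin (k-1) → Fin d}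

/-- A vertex of `L_i` (`2 ≤ i ≤ k`) is itself a spine vertex for suitable data. -/
theorem joinOwn (hk : 5 ≤ k) (hone : ones d ∈ S) {i : ℕ} (h2 : 2 ≤ i) (hik : i ≤ k)
    (hmem : Vert.node (Tag.L i) p xα ∈ setL k d S i) :
    ∃ aV bV : Fin k → Vec d, InS S aV ∧ InS S bV ∧ Mx k d aV bV xα ∧
      Vert.node (Tag.L i) p xα = CL k d i aV bV xα := by
  obtain ⟨hf, hbit⟩ := setLmid_elim h2 hik hmem
  refine ⟨fun j => if (j:ℕ) < k - i then extractP p j else ones d,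
    fun j => if k - i + 2 ≤ (j:ℕ) then extractP p j else ones d, ?_, ?_, ?_, ?_⟩
  · intro j; dsimp only; split
    · exact extractP_inS hf hone j
    · exact hone
  · intro j; dsimp only; split
    · exact extractP_inS hf hone j
    · exact hone
  · intro j ℓ
    constructor
    · intro hℓ
      dsimp only; split
      · rename_i hj
        obtain ⟨a, _, he⟩ := (hf j).1 (Or.inl hj)
        exact hbit.1 j hj (extractP p j) (extractP_eq he) ℓ hℓ
      · rfl
    · intro hℓ
      dsimp only; split
      · rename_i hj
        obtain ⟨a, _, he⟩ := (hf j).1 (Or.inr hj)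
        exact hbit.2 j hj (extractP p j) (extractP_eq he) ℓ hℓ
      · rfl
  · have : p = pSp k d i (fun j => if (j:ℕ) < k - i then extractP p j else ones d)
        (fun j => if k - i + 2 ≤ (j:ℕ) then extractP p j else ones d) := by
      funext j
      by_cases h1 : (j:ℕ) < k - i
      · obtain ⟨a, _, he⟩ := (hf j).1 (Or.inl h1)
        rw [extractP_eq he]
        simp only [pSp]; rw [if_pos h1, if_pos h1]
      · by_cases h3 : k - i + 2 ≤ (j:ℕ)
        · obtain ⟨a, _, he⟩ := (hf j).1 (Or.inr h3)
          rw [extractP_eq he]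
          simp only [pSp]; rw [if_neg h1, if_pos h3, if_pos h3]
        · rw [(hf j).2 (by tauto)]
          simp only [pSp]; rw [if_neg h1, if_neg h3]
    rw [CL, ← this]

/-- Join from `L'_i` to `C_i` in one step (both vector regions must match). -/
theorem joinL'own (hk : 5 ≤ k) {i : ℕ}
    (ha : InS S aV) (hb : InS S bV) (hx : Mx k d aV bV x)
    (hmem : Vert.node (Tag.L' i) p xα ∈ setL' k d S i)
    (hma : ∀ j : Fin k, (j:ℕ) < k - i → p j = some (aV j))
    (hmb : ∀ j : Fin k, k - i + 2 ≤ (j:ℕ) → p j = some (bV j)) :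
    DistLE (Adj k d S) (Vert.node (Tag.L' i) p xα) (CL k d i aV bV x) 1 := by
  obtain ⟨h3, hik, hf⟩ := setL'_elim hmem
  have hp : p = pSp k d i aV bV := p_eq_pSp hf hma hmb
  subst hp
  exact distLE_adj (adj_of_coordE
    ⟨Tag.L' i, Tag.L i, pSp k d i aV bV, xα, x, rfl, rfl, node_LL'_ne.symm,
      Or.inr (Or.inl ⟨i, hmem, memL_sp (by omega) (by omega) ha hb hx⟩)⟩)

/-- `k = 5` only: join from `A_4 = A_{k-1}` to `C_4` with `aV` unconstrained. -/
theorem joinA5 (hk5 : k = 5)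
    (ha : InS S aV) (hb : InS S bV) (hx : Mx k d aV bV x)
    (hmem : Vert.node (Tag.A 4) p xα ∈ setA k d S 4) :
    DistLE (Adj k d S) (Vert.node (Tag.A 4) p xα) (CL k d 4 aV bV x) 2 := by
  obtain ⟨_, _, hf, _⟩ := setA_elim hmem
  set pW : Fin k → Option (Vec d) :=
    fun j => if (j:ℕ) = 0 then p j else pSp k d 4 aV bV j with hpW
  have memW : Vert.node (Tag.L' 4) pW x ∈ setL' k d S 4 := by
    refine ⟨pW, x, rfl, by omega, by omega, ?_⟩
    intro j
    have hjk := j.isLt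
    constructor
    · rintro (hj | hj)
      · have hj0 : (j:ℕ) = 0 := by omega
        obtain ⟨a, haS, he⟩ := (hf j).1 (by omega)
        exact ⟨a, haS, by simp only [hpW]; rw [if_pos hj0]; exact he⟩
      · refine ⟨bV j, hb j, ?_⟩
        simp only [hpW, pSp]
        rw [if_neg (by omega), if_neg (by omega), if_pos hj]
    · intro hj
      have h1 : ¬ ((j:ℕ) < k - 4) := fun hh => hj (Or.inl hh)
      have h2 : ¬ (k - 4 + 2 ≤ (j:ℕ)) := fun hh => hj (Or.inr hh)
      simp only [hpW, pSp]
      rw [if_neg (by omega), if_neg h1, if_neg h2]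
  have step1 : Adj k d S (Vert.node (Tag.A 4) p xα) (Vert.node (Tag.L' 4) pW x) := by
    refine adj_of_aback (Or.inr (Or.inl
      ⟨4, p, xα, pW, x, hmem, memW, rfl, rfl, ?_⟩))
    intro j hj
    simp only [hpW]; rw [if_pos (by omega)]
  have step2 : Adj k d S (Vert.node (Tag.L' 4) pW x) (CL k d 4 aV bV x) := by
    refine adj_of_vecE'
      ⟨4, pSp k d 4 aV bV, x, pW, x, by omega, by omega, rfl, rfl,
        memL_sp (by omega) (by omega) ha hb hx, memW, rfl, Or.inl ?_⟩
    intro j hj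
    simp only [hpW]; rw [if_neg (by omega)]
  exact distLE_cons step1 (distLE_cons step2 (distLE_refl _))

end Joins3

section Exits

variable {k d : ℕ} {S : Finset (Vec d)} {aV bV : Fin k → Vec d} {x : Fin (k-1) → Fin d}
variable {p : Fin k → Option (Vec d)} {xβ : Fin (k-1) → Fin d}

/-- The `B_i` vertex with suffix taken from `bV`. -/
def pBSp (k d : ℕ) (i : ℕ) (bV : Fin k → Vec d) : Fin k → Option (Vec d) :=
  fun j => if k - i + 2 ≤ (j:ℕ) then some (bV j) else none

theorem memB_pBSp {i : ℕ} (hd : 0 < d) (h3 : 3 ≤ i) (hik : i ≤ k - 2)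
    (hb : InS S bV) :
    Vert.node (Tag.B i) (pBSp k d i bV) (zx k hd) ∈ setB k d S i := by
  refine ⟨pBSp k d i bV, zx k hd, rfl, h3, hik, ?_, zeroX_zx⟩
  intro j
  constructor
  · intro hj
    exact ⟨bV j, hb j, by simp only [pBSp]; rw [if_pos hj]⟩
  · intro hj; simp only [pBSp]; rw [if_neg hj]

/-- Adjacency from `C'_{k-2}` to the `B_{i'}` vertex filled by `bV`. -/
theorem adj_C'_B (hk : 5 ≤ k) (hd : 0 < d) {i' : ℕ} (h3 : 3 ≤ i') (hik : i' ≤ k - 2)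
    (ha : InS S aV) (hb : InS S bV) :
    Adj k d S (CL' k d (k-2) aV bV x) (Vert.node (Tag.B i') (pBSp k d i' bV) (zx k hd)) := by
  refine adj_of_bback (Or.inr (Or.inl
    ⟨i', pSp k d (k-2) aV bV, x, pBSp k d i' bV, zx k hd,
      memL'_sp (by omega) (by omega) ha hb, memB_pBSp hd h3 hik hb, rfl, rfl, ?_⟩))
  intro j hj
  have hjk := j.isLt
  simp only [pBSp, pSp]
  rw [if_pos hj, if_neg (by omega), if_pos (by omega)]

/-- Exit to `L_{i'} ∪ L'_{i'}` (`3 ≤ i' ≤ k-2`) from `C_{k-2}` via `B_{i'}`. -/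
theorem exitMid (hk : 5 ≤ k) (hd : 0 < d) {i' : ℕ} (h3 : 3 ≤ i') (hik : i' ≤ k - 2)
    {tg : Tag}
    (ha : InS S aV) (hb : InS S bV) (hx : Mx k d aV bV x)
    (hor : Vert.node tg p xβ ∈ setL k d S i' ∨ Vert.node tg p xβ ∈ setL' k d S i')
    (hm : ∀ j : Fin k, k - i' + 2 ≤ (j:ℕ) → p j = some (bV j)) :
    DistLE (Adj k d S) (CL k d (k-2) aV bV x) (Vert.node tg p xβ) 3 := by
  have step3 : Adj k d S (Vert.node (Tag.B i') (pBSp k d i' bV) (zx k hd))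
      (Vert.node tg p xβ) := by
    refine adj_of_bback (Or.inl
      ⟨i', tg, pBSp k d i' bV, zx k hd, p, xβ, memB_pBSp hd h3 hik hb, hor,
        rfl, rfl, ?_⟩)
    intro j hj
    simp only [pBSp]; rw [if_pos hj, hm j hj]
  exact distLE_cons (adj_L_L' (k-2) (by omega) (by omega) ha hb hx x)
    (distLE_cons (adj_C'_B hk hd h3 hik ha hb)
      (distLE_cons step3 (distLE_refl _)))

/-- Exit to `B_{i'}` (`3 ≤ i' ≤ k-2`) from `C_{k-2}`. -/
theorem exitB (hk : 5 ≤ k) {i' : ℕ} (h3 : 3 ≤ i') (hik : i' ≤ k - 2)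
    (ha : InS S aV) (hb : InS S bV) (hx : Mx k d aV bV x)
    (hmem : Vert.node (Tag.B i') p xβ ∈ setB k d S i')
    (hm : ∀ j : Fin k, k - i' + 2 ≤ (j:ℕ) → p j = some (bV j)) :
    DistLE (Adj k d S) (CL k d (k-2) aV bV x) (Vert.node (Tag.B i') p xβ) 2 := by
  have step2 : Adj k d S (CL' k d (k-2) aV bV x) (Vert.node (Tag.B i') p xβ) := by
    refine adj_of_bback (Or.inr (Or.inl
      ⟨i', pSp k d (k-2) aV bV, x, p, xβ,
        memL'_sp (by omega) (by omega) ha hb, hmem, rfl, rfl, ?_⟩))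
    intro j hj
    have hjk := j.isLt
    rw [hm j hj]
    simp only [pSp]
    rw [if_neg (by omega), if_pos (by omega)]
  exact distLE_cons (adj_L_L' (k-2) (by omega) (by omega) ha hb hx x)
    (distLE_cons step2 (distLE_refl _))

/-- Exit to `A_{i'}` (`4 ≤ i' ≤ k-2`) from `C_{k-2}`; fully unconstrained. -/
theorem exitA (hk : 5 ≤ k) (hd : 0 < d) {i' : ℕ} (h4 : 4 ≤ i') (hik : i' ≤ k - 2)
    {β : Vert k d}
    (ha : InS S aV) (hb : InS S bV) (hx : Mx k d aV bV x)
    (hmem : β ∈ setA k d S i') :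
    DistLE (Adj k d S) (CL k d (k-2) aV bV x) β 3 := by
  have step3 : Adj k d S (Vert.node (Tag.B i') (pBSp k d i' bV) (zx k hd)) β :=
    adj_of_baback ⟨i', h4, hik, memB_pBSp hd (by omega) hik hb, hmem⟩
  exact distLE_cons (adj_L_L' (k-2) (by omega) (by omega) ha hb hx x)
    (distLE_cons (adj_C'_B hk hd (by omega) hik ha hb)
      (distLE_cons step3 (distLE_refl _)))

/-- Exit to `L_{k-1} ∪ L'_{k-1}` from `C_{k-1}` via a vector-change of `a_1`. -/
theorem exitTop (hk : 5 ≤ k) {tg : Tag}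
    (ha : InS S aV) (hb : InS S bV) (hx : Mx k d aV bV x)
    (hor : Vert.node tg p xβ ∈ setL k d S (k-1) ∨
      Vert.node tg p xβ ∈ setL' k d S (k-1))
    (hf : FillsS k d S (fun j => j < k - (k-1) ∨ k - (k-1) + 2 ≤ j) p)
    (hm : ∀ j : Fin k, 3 ≤ (j:ℕ) → p j = some (bV j)) :
    DistLE (Adj k d S) (CL k d (k-1) aV bV x) (Vert.node tg p xβ) 2 := by
  have memW : Vert.node (Tag.L' (k-1)) p x ∈ setL' k d S (k-1) :=
    ⟨p, x, rfl, by omega, le_refl _, hf⟩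
  have step1 : Adj k d S (CL k d (k-1) aV bV x) (Vert.node (Tag.L' (k-1)) p x) := by
    refine adj_of_vecE
      ⟨k-1, pSp k d (k-1) aV bV, x, p, x, by omega, le_refl _, rfl, rfl,
        memL_sp (by omega) (by omega) ha hb hx, memW, rfl, Or.inl ?_⟩
    intro j hj
    have hjk := j.isLt
    by_cases h3 : 3 ≤ (j:ℕ)
    · rw [hm j h3]; simp only [pSp]; rw [if_neg (by omega), if_pos (by omega)]
    · rw [(hf j).2 (by omega)]
      simp only [pSp]; rw [if_neg (by omega), if_neg (by omega)]
  rcases hor with hmem | hmem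
  · have htg : tg = Tag.L (k-1) := by
      obtain ⟨_, _, he, _⟩ := hmem
      injection he with h1 _ _
    subst htg
    have step2 : Adj k d S (Vert.node (Tag.L' (k-1)) p x)
        (Vert.node (Tag.L (k-1)) p xβ) :=
      adj_of_coordE ⟨Tag.L' (k-1), Tag.L (k-1), p, x, xβ, rfl, rfl,
        node_LL'_ne.symm, Or.inr (Or.inl ⟨k-1, memW, hmem⟩)⟩
    exact distLE_cons step1 (distLE_cons step2 (distLE_refl _))
  · have htg : tg = Tag.L' (k-1) := by
      obtain ⟨_, _, he, _⟩ := hmem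
      injection he with h1 _ _
    subst htg
    have step2 : Vert.node (Tag.L' (k-1)) p x = Vert.node (Tag.L' (k-1)) p xβ ∨
        Adj k d S (Vert.node (Tag.L' (k-1)) p x) (Vert.node (Tag.L' (k-1)) p xβ) := by
      by_cases hxe : x = xβ
      · exact Or.inl (by rw [hxe])
      · exact Or.inr (adj_of_coordE ⟨Tag.L' (k-1), Tag.L' (k-1), p, x, xβ, rfl, rfl,
          node_ne_x hxe, Or.inl ⟨k-1, memW, hmem⟩⟩)
    exact distLE_cons step1 (distLE_step step2 (distLE_refl _))

end Exits

section Exits2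

variable {k d : ℕ} {S : Finset (Vec d)} {aV bV : Fin k → Vec d} {x : Fin (k-1) → Fin d}
variable {p : Fin k → Option (Vec d)} {xβ : Fin (k-1) → Fin d}

/-- Exit to `A_{k-1}` from `C_{k-1}`; fully unconstrained. -/
theorem exitAtop (hk : 5 ≤ k)
    (ha : InS S aV) (hb : InS S bV) (hx : Mx k d aV bV x)
    (hmem : Vert.node (Tag.A (k-1)) p xβ ∈ setA k d S (k-1)) :
    DistLE (Adj k d S) (CL k d (k-1) aV bV x) (Vert.node (Tag.A (k-1)) p xβ) 2 := by
  obtain ⟨_, _, hf, _⟩ := setA_elim hmem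
  set pW : Fin k → Option (Vec d) :=
    fun j => if (j:ℕ) = 0 then p j else pSp k d (k-1) aV bV j with hpW
  have memW : Vert.node (Tag.L' (k-1)) pW x ∈ setL' k d S (k-1) := by
    refine ⟨pW, x, rfl, by omega, le_refl _, ?_⟩
    intro j
    have hjk := j.isLt
    constructor
    · rintro (hj | hj)
      · have hj0 : (j:ℕ) = 0 := by omega
        obtain ⟨a, haS, he⟩ := (hf j).1 (by omega)
        exact ⟨a, haS, by simp only [hpW]; rw [if_pos hj0]; exact he⟩
      · refine ⟨bV j, hb j, ?_⟩
        simp only [hpW, pSp]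
        rw [if_neg (by omega), if_neg (by omega), if_pos hj]
    · intro hj
      have h1 : ¬ ((j:ℕ) < k - (k-1)) := fun hh => hj (Or.inl hh)
      have h2 : ¬ (k - (k-1) + 2 ≤ (j:ℕ)) := fun hh => hj (Or.inr hh)
      simp only [hpW, pSp]
      rw [if_neg (by omega), if_neg h1, if_neg h2]
  have step1 : Adj k d S (CL k d (k-1) aV bV x) (Vert.node (Tag.L' (k-1)) pW x) := by
    refine adj_of_vecE
      ⟨k-1, pSp k d (k-1) aV bV, x, pW, x, by omega, le_refl _, rfl, rfl,
        memL_sp (by omega) (by omega) ha hb hx, memW, rfl, Or.inl ?_⟩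
    intro j hj
    simp only [hpW]; rw [if_neg (by omega)]
  have step2 : Adj k d S (Vert.node (Tag.L' (k-1)) pW x)
      (Vert.node (Tag.A (k-1)) p xβ) := by
    refine adj_of_aback (Or.inl
      ⟨k-1, Tag.L' (k-1), pW, x, p, xβ, Or.inr memW, hmem, rfl, rfl, ?_⟩)
    intro j hj
    simp only [hpW]; rw [if_pos (by omega)]
  exact distLE_cons step1 (distLE_cons step2 (distLE_refl _))

/-- Exit to `L_k` from `C_k`. -/
theorem exitLk (hk : 5 ≤ k)
    (ha : InS S aV) (hb : InS S bV) (hx : Mx k d aV bV x)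
    (hmem : Vert.node (Tag.L k) p xβ ∈ setL k d S k)
    (hm : ∀ j : Fin k, 2 ≤ (j:ℕ) → p j = some (bV j)) :
    DistLE (Adj k d S) (CL k d k aV bV x) (Vert.node (Tag.L k) p xβ) 1 := by
  have hf := (setLmid_elim (by omega) (le_refl k) hmem).1
  have hp : p = pSp k d k aV bV :=
    p_eq_pSp hf (fun j hj => absurd hj (by omega)) (fun j hj => hm j (by omega))
  subst hp
  refine distLE_step ?_ (distLE_refl _)
  by_cases hxe : x = xβ
  · exact Or.inl (by rw [hxe]; rfl)
  · exact Or.inr (adj_of_coordE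
      ⟨Tag.L k, Tag.L k, pSp k d k aV bV, x, xβ, rfl, rfl, node_ne_x hxe,
        Or.inr (Or.inr (Or.inr (Or.inr
          ⟨memL_sp (by omega) (le_refl k) ha hb hx, hmem⟩)))⟩)

/-- Exit to `L_{k+1}` from `C_k`. -/
theorem exitLtop (hk : 5 ≤ k)
    (ha : InS S aV) (hb : InS S bV) (hx : Mx k d aV bV x)
    (hmem : Vert.node (Tag.L (k+1)) p xβ ∈ setL k d S (k+1))
    (hm : ∀ j : Fin k, 2 ≤ (j:ℕ) → p j = some (bV j)) :
    DistLE (Adj k d S) (CL k d k aV bV x) (Vert.node (Tag.L (k+1)) p xβ) 1 := by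
  refine distLE_adj (adj_of_swapE' (Or.inr (Or.inr
    ⟨p, xβ, pSp k d k aV bV, x, rfl, rfl, hmem,
      memL_sp (by omega) (le_refl k) ha hb hx, ?_⟩)))
  intro j hj
  have hjk := j.isLt
  by_cases h2 : 2 ≤ (j:ℕ)
  · simp only [pSp]
    rw [if_neg (by omega), if_pos (by omega), hm j h2]
  · have h0 : (j:ℕ) = 0 := by omega
    rw [((setLtop_elim hk hmem).1 j).2 (by omega)]
    simp only [pSp]
    rw [if_neg (by omega), if_neg (by omega)]

/-- Exit to `u` from `C_k`. -/
theorem exitU (hk : 5 ≤ k)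
    (ha : InS S aV) (hb : InS S bV) (hx : Mx k d aV bV x) :
    DistLE (Adj k d S) (CL k d k aV bV x) (Vert.uu : Vert k d) 1 :=
  distLE_adj (adj_of_fixedE (Or.inr (Or.inr (Or.inl
    ⟨Or.inl (memL_sp (by omega) (le_refl k) ha hb hx), rfl⟩))))

/-- Exit to `v` from `C_{k-2}`. -/
theorem exitV (hk : 5 ≤ k)
    (ha : InS S aV) (hb : InS S bV) (hx : Mx k d aV bV x) :
    DistLE (Adj k d S) (CL k d (k-2) aV bV x) (Vert.vv : Vert k d) 2 :=
  distLE_cons (adj_L_L' (k-2) (by omega) (by omega) ha hb hx x)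
    (distLE_cons (adj_of_fixedE (Or.inl
      ⟨memL'_sp (by omega) (by omega) ha hb, rfl⟩)) (distLE_refl _))

/-- Exit to `L_1 ∪ L_2` from `C_{k-2}` via `v`; fully unconstrained. -/
theorem exitLow (hk : 5 ≤ k) {β : Vert k d}
    (ha : InS S aV) (hb : InS S bV) (hx : Mx k d aV bV x)
    (hmem : β ∈ setL k d S 1 ∨ β ∈ setL k d S 2) :
    DistLE (Adj k d S) (CL k d (k-2) aV bV x) β 3 :=
  distLE_cons (adj_L_L' (k-2) (by omega) (by omega) ha hb hx x)
    (distLE_cons (adj_of_fixedE (Or.inl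
      ⟨memL'_sp (by omega) (by omega) ha hb, rfl⟩))
      (distLE_cons (adj_of_fixedE (Or.inr (Or.inl ⟨rfl, hmem⟩)))
        (distLE_refl _)))

/-- Exit to `L_1` from `C_2` (needs `aV` to match `β`). -/
theorem exitL1dir (hk : 5 ≤ k)
    (ha : InS S aV) (hb : InS S bV) (hx : Mx k d aV bV x)
    (hmem : Vert.node (Tag.L 1) p xβ ∈ setL k d S 1)
    (hm : ∀ j : Fin k, (j:ℕ) < k - 2 → p j = some (aV j)) :
    DistLE (Adj k d S) (CL k d 2 aV bV x) (Vert.node (Tag.L 1) p xβ) 1 := by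
  refine distLE_adj (adj_of_swapE' (Or.inr (Or.inl
    ⟨p, xβ, pSp k d 2 aV bV, x, rfl, rfl, hmem,
      memL_sp (le_refl 2) (by omega) ha hb hx, ?_⟩)))
  intro j hj
  have hjk := j.isLt
  by_cases h1 : (j:ℕ) < k - 2
  · simp only [pSp]; rw [if_pos h1, hm j h1]
  · rw [((setL1_elim hk hmem).1 j).2 (by omega)]
    simp only [pSp]; rw [if_neg h1, if_neg (by omega)]

/-- Exit to `L_2` from `C_2` (needs `aV` to match `β`). -/
theorem exitL2dir (hk : 5 ≤ k)
    (ha : InS S aV) (hb : InS S bV) (hx : Mx k d aV bV x)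
    (hmem : Vert.node (Tag.L 2) p xβ ∈ setL k d S 2)
    (hm : ∀ j : Fin k, (j:ℕ) < k - 2 → p j = some (aV j)) :
    DistLE (Adj k d S) (CL k d 2 aV bV x) (Vert.node (Tag.L 2) p xβ) 1 := by
  have hf := (setLmid_elim (le_refl 2) (by omega) hmem).1
  have hp : p = pSp k d 2 aV bV :=
    p_eq_pSp hf hm (fun j hj => absurd j.isLt (by omega))
  subst hp
  refine distLE_step ?_ (distLE_refl _)
  by_cases hxe : x = xβ
  · exact Or.inl (by rw [hxe]; rfl)
  · exact Or.inr (adj_of_coordE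
      ⟨Tag.L 2, Tag.L 2, pSp k d 2 aV bV, x, xβ, rfl, rfl, node_ne_x hxe,
        Or.inr (Or.inr (Or.inr (Or.inl
          ⟨memL_sp (le_refl 2) (by omega) ha hb hx, hmem⟩)))⟩)

end Exits2

section Exits3

variable {k d : ℕ} {S : Finset (Vec d)} {aV bV : Fin k → Vec d} {x : Fin (k-1) → Fin d}
variable {p : Fin k → Option (Vec d)} {xβ : Fin (k-1) → Fin d}

/-- Exit to `L_3 ∪ L'_3` from `C_3` (needs `aV` to match `β`; `bV` unconstrained). -/
theorem exitL3dir (hk : 5 ≤ k) {tg : Tag}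
    (ha : InS S aV) (hb : InS S bV) (hx : Mx k d aV bV x)
    (hor : Vert.node tg p xβ ∈ setL k d S 3 ∨ Vert.node tg p xβ ∈ setL' k d S 3)
    (hf : FillsS k d S (fun j => j < k - 3 ∨ k - 3 + 2 ≤ j) p)
    (hm : ∀ j : Fin k, (j:ℕ) < k - 3 → p j = some (aV j)) :
    DistLE (Adj k d S) (CL k d 3 aV bV x) (Vert.node tg p xβ) 2 := by
  have memW : Vert.node (Tag.L' 3) p x ∈ setL' k d S 3 :=
    ⟨p, x, rfl, le_refl 3, by omega, hf⟩
  have step1 : Adj k d S (CL k d 3 aV bV x) (Vert.node (Tag.L' 3) p x) := by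
    refine adj_of_vecE
      ⟨3, pSp k d 3 aV bV, x, p, x, le_refl 3, by omega, rfl, rfl,
        memL_sp (by omega) (by omega) ha hb hx, memW, rfl, Or.inr ?_⟩
    intro j hj
    have hjk := j.isLt
    by_cases h1 : (j:ℕ) < k - 3
    · rw [hm j h1]; simp only [pSp]; rw [if_pos h1]
    · rw [(hf j).2 (by omega)]
      simp only [pSp]; rw [if_neg h1, if_neg (by omega)]
  rcases hor with hmem | hmem
  · have htg : tg = Tag.L 3 := by
      obtain ⟨_, _, he, _⟩ := hmem
      injection he with h1 _ _
    subst htg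
    have step2 : Adj k d S (Vert.node (Tag.L' 3) p x) (Vert.node (Tag.L 3) p xβ) :=
      adj_of_coordE ⟨Tag.L' 3, Tag.L 3, p, x, xβ, rfl, rfl,
        node_LL'_ne.symm, Or.inr (Or.inl ⟨3, memW, hmem⟩)⟩
    exact distLE_cons step1 (distLE_cons step2 (distLE_refl _))
  · have htg : tg = Tag.L' 3 := by
      obtain ⟨_, _, he, _⟩ := hmem
      injection he with h1 _ _
    subst htg
    have step2 : Vert.node (Tag.L' 3) p x = Vert.node (Tag.L' 3) p xβ ∨
        Adj k d S (Vert.node (Tag.L' 3) p x) (Vert.node (Tag.L' 3) p xβ) := by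
      by_cases hxe : x = xβ
      · exact Or.inl (by rw [hxe])
      · exact Or.inr (adj_of_coordE ⟨Tag.L' 3, Tag.L' 3, p, x, xβ, rfl, rfl,
          node_ne_x hxe, Or.inl ⟨3, memW, hmem⟩⟩)
    exact distLE_cons step1 (distLE_step step2 (distLE_refl _))

/-- `k = 5` only: exit to `L_3 ∪ L'_3` from `C_3` via `B_3`; fully unconstrained. -/
theorem exit14 (hk5 : k = 5) (hd : 0 < d) {tg : Tag}
    (ha : InS S aV) (hb : InS S bV) (hx : Mx k d aV bV x)
    (hor : Vert.node tg p xβ ∈ setL k d S 3 ∨ Vert.node tg p xβ ∈ setL' k d S 3)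
    (hf : FillsS k d S (fun j => j < k - 3 ∨ k - 3 + 2 ≤ j) p) :
    DistLE (Adj k d S) (CL k d 3 aV bV x) (Vert.node tg p xβ) 3 := by
  have hk : 5 ≤ k := by omega
  have e32 : k - 2 = 3 := by omega
  set pW : Fin k → Option (Vec d) :=
    fun j => if (j:ℕ) = k - 1 then p j else pSp k d 3 aV bV j with hpW
  have memW : Vert.node (Tag.L' 3) pW x ∈ setL' k d S 3 := by
    refine ⟨pW, x, rfl, le_refl 3, by omega, ?_⟩
    intro j
    have hjk := j.isLt
    constructor
    · rintro (hj | hj)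
      · refine ⟨aV j, ha j, ?_⟩
        simp only [hpW, pSp]
        rw [if_neg (by omega), if_pos hj]
      · have hj1 : (j:ℕ) = k - 1 := by omega
        obtain ⟨a, haS, he⟩ := (hf j).1 (by omega)
        exact ⟨a, haS, by simp only [hpW]; rw [if_pos hj1]; exact he⟩
    · intro hj
      have h1 : ¬ ((j:ℕ) < k - 3) := fun hh => hj (Or.inl hh)
      have h2 : ¬ (k - 3 + 2 ≤ (j:ℕ)) := fun hh => hj (Or.inr hh)
      simp only [hpW, pSp]
      rw [if_neg (by omega), if_neg h1, if_neg h2]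
  have memW2 : Vert.node (Tag.L' 3) pW x ∈ setL' k d S (k-2) := by
    rw [e32]; exact memW
  have step1 : Adj k d S (CL k d 3 aV bV x) (Vert.node (Tag.L' 3) pW x) := by
    refine adj_of_vecE
      ⟨3, pSp k d 3 aV bV, x, pW, x, le_refl 3, by omega, rfl, rfl,
        memL_sp (by omega) (by omega) ha hb hx, memW, rfl, Or.inr ?_⟩
    intro j hj
    simp only [hpW]; rw [if_neg (by omega)]
  set pB : Fin k → Option (Vec d) :=
    fun j => if k - 3 + 2 ≤ (j:ℕ) then p j else none with hpB
  have memBv : Vert.node (Tag.B 3) pB (zx k hd) ∈ setB k d S 3 := by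
    refine ⟨pB, zx k hd, rfl, le_refl 3, by omega, ?_, zeroX_zx⟩
    intro j
    constructor
    · intro hj
      obtain ⟨a, haS, he⟩ := (hf j).1 (Or.inr hj)
      exact ⟨a, haS, by simp only [hpB]; rw [if_pos hj]; exact he⟩
    · intro hj; simp only [hpB]; rw [if_neg hj]
  have step2 : Adj k d S (Vert.node (Tag.L' 3) pW x)
      (Vert.node (Tag.B 3) pB (zx k hd)) := by
    refine adj_of_bback (Or.inr (Or.inl
      ⟨3, pW, x, pB, zx k hd, memW2, memBv, by rw [e32], rfl, ?_⟩))
    intro j hj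
    have hjk := j.isLt
    simp only [hpB, hpW]
    rw [if_pos hj, if_pos (by omega)]
  have step3 : Adj k d S (Vert.node (Tag.B 3) pB (zx k hd)) (Vert.node tg p xβ) := by
    refine adj_of_bback (Or.inl
      ⟨3, tg, pB, zx k hd, p, xβ, memBv, hor, rfl, rfl, ?_⟩)
    intro j hj
    simp only [hpB]; rw [if_pos hj]
  exact distLE_cons step1 (distLE_cons step2 (distLE_cons step3 (distLE_refl _)))

/-- `k = 5` only: exit to `B_3` from `C_3`; fully unconstrained. -/
theorem exitB3via5 (hk5 : k = 5)
    (ha : InS S aV) (hb : InS S bV) (hx : Mx k d aV bV x)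
    (hmem : Vert.node (Tag.B 3) p xβ ∈ setB k d S 3) :
    DistLE (Adj k d S) (CL k d 3 aV bV x) (Vert.node (Tag.B 3) p xβ) 2 := by
  have hk : 5 ≤ k := by omega
  have e32 : k - 2 = 3 := by omega
  obtain ⟨_, _, hfB, _⟩ := setB_elim hmem
  set pW : Fin k → Option (Vec d) :=
    fun j => if (j:ℕ) = k - 1 then p j else pSp k d 3 aV bV j with hpW
  have memW : Vert.node (Tag.L' 3) pW x ∈ setL' k d S 3 := by
    refine ⟨pW, x, rfl, le_refl 3, by omega, ?_⟩
    intro j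
    have hjk := j.isLt
    constructor
    · rintro (hj | hj)
      · refine ⟨aV j, ha j, ?_⟩
        simp only [hpW, pSp]
        rw [if_neg (by omega), if_pos hj]
      · have hj1 : (j:ℕ) = k - 1 := by omega
        obtain ⟨a, haS, he⟩ := (hfB j).1 (by omega)
        exact ⟨a, haS, by simp only [hpW]; rw [if_pos hj1]; exact he⟩
    · intro hj
      have h1 : ¬ ((j:ℕ) < k - 3) := fun hh => hj (Or.inl hh)
      have h2 : ¬ (k - 3 + 2 ≤ (j:ℕ)) := fun hh => hj (Or.inr hh)
      simp only [hpW, pSp]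
      rw [if_neg (by omega), if_neg h1, if_neg h2]
  have memW2 : Vert.node (Tag.L' 3) pW x ∈ setL' k d S (k-2) := by
    rw [e32]; exact memW
  have step1 : Adj k d S (CL k d 3 aV bV x) (Vert.node (Tag.L' 3) pW x) := by
    refine adj_of_vecE
      ⟨3, pSp k d 3 aV bV, x, pW, x, le_refl 3, by omega, rfl, rfl,
        memL_sp (by omega) (by omega) ha hb hx, memW, rfl, Or.inr ?_⟩
    intro j hj
    simp only [hpW]; rw [if_neg (by omega)]
  have step2 : Adj k d S (Vert.node (Tag.L' 3) pW x) (Vert.node (Tag.B 3) p xβ) := by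
    refine adj_of_bback (Or.inr (Or.inl
      ⟨3, pW, x, p, xβ, memW2, hmem, by rw [e32], rfl, ?_⟩))
    intro j hj
    have hjk := j.isLt
    simp only [hpW]
    rw [if_pos (by omega)]
  exact distLE_cons step1 (distLE_cons step2 (distLE_refl _))

end Exits3

section Grand

variable {k d : ℕ} {S : Finset (Vec d)}

/-- Classification of the vertices of `G`. -/
theorem sourceCases (hk : 5 ≤ k) {α : Vert k d} (hα : α ∈ VertexSet k d S) :
    (∃ p xα, α = Vert.node (Tag.L 1) p xα ∧
      Vert.node (Tag.L 1) p xα ∈ setL k d S 1) ∨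
    (∃ p xα, α = Vert.node (Tag.L 2) p xα ∧
      Vert.node (Tag.L 2) p xα ∈ setL k d S 2) ∨
    (∃ p xα, α = Vert.node (Tag.L 3) p xα ∧
      Vert.node (Tag.L 3) p xα ∈ setL k d S 3) ∨
    (∃ p xα, α = Vert.node (Tag.L' 3) p xα ∧
      Vert.node (Tag.L' 3) p xα ∈ setL' k d S 3) ∨
    (∃ i p xα, 4 ≤ i ∧ i ≤ k - 1 ∧ α = Vert.node (Tag.L i) p xα ∧
      Vert.node (Tag.L i) p xα ∈ setL k d S i) ∨
    (∃ i p xα, 4 ≤ i ∧ i ≤ k - 1 ∧ α = Vert.node (Tag.L' i) p xα ∧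
      Vert.node (Tag.L' i) p xα ∈ setL' k d S i) ∨
    (∃ p xα, α = Vert.node (Tag.L k) p xα ∧
      Vert.node (Tag.L k) p xα ∈ setL k d S k) ∨
    (∃ p xα, α = Vert.node (Tag.L (k+1)) p xα ∧
      Vert.node (Tag.L (k+1)) p xα ∈ setL k d S (k+1)) ∨
    (∃ i p xα, 4 ≤ i ∧ i ≤ k - 1 ∧ α = Vert.node (Tag.A i) p xα ∧
      Vert.node (Tag.A i) p xα ∈ setA k d S i) ∨
    (∃ p xα, α = Vert.node (Tag.B 3) p xα ∧
      Vert.node (Tag.B 3) p xα ∈ setB k d S 3) ∨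
    (∃ i p xα, 4 ≤ i ∧ i ≤ k - 2 ∧ α = Vert.node (Tag.B i) p xα ∧
      Vert.node (Tag.B i) p xα ∈ setB k d S i) ∨
    α = Vert.uu ∨ α = Vert.vv := by
  rcases hα with (((hL | hL') | hA) | hB) | huv
  · obtain ⟨i, hLi⟩ := Set.mem_iUnion.1 hL
    obtain ⟨p, xα, he, hcase⟩ := id hLi
    subst he
    have hir : i = 1 ∨ i = k + 1 ∨ (2 ≤ i ∧ i ≤ k) := by
      rcases hcase with ⟨h, _⟩ | ⟨h, _⟩ | ⟨h1, h2, _⟩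
      exacts [Or.inl h, Or.inr (Or.inl h), Or.inr (Or.inr ⟨h1, h2⟩)]
    rcases hir with rfl | rfl | ⟨h2, hik⟩
    · exact Or.inl ⟨p, xα, rfl, hLi⟩
    · refine Or.inr (Or.inr (Or.inr (Or.inr (Or.inr (Or.inr (Or.inr (Or.inl
        ⟨p, xα, rfl, hLi⟩)))))))
    · have : i = 2 ∨ i = 3 ∨ (4 ≤ i ∧ i ≤ k - 1) ∨ i = k := by omega
      rcases this with rfl | rfl | ⟨h4, hik1⟩ | rfl
      · exact Or.inr (Or.inl ⟨p, xα, rfl, hLi⟩)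
      · exact Or.inr (Or.inr (Or.inl ⟨p, xα, rfl, hLi⟩))
      · exact Or.inr (Or.inr (Or.inr (Or.inr (Or.inl
          ⟨i, p, xα, h4, hik1, rfl, hLi⟩))))
      · exact Or.inr (Or.inr (Or.inr (Or.inr (Or.inr (Or.inr (Or.inl
          ⟨p, xα, rfl, hLi⟩))))))
  · obtain ⟨i, hLi⟩ := Set.mem_iUnion.1 hL'
    obtain ⟨p, xα, he, h3, hik, _⟩ := id hLi
    subst he
    have : i = 3 ∨ (4 ≤ i ∧ i ≤ k - 1) := by omega
    rcases this with rfl | ⟨h4, hik1⟩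
    · exact Or.inr (Or.inr (Or.inr (Or.inl ⟨p, xα, rfl, hLi⟩)))
    · exact Or.inr (Or.inr (Or.inr (Or.inr (Or.inr (Or.inl
        ⟨i, p, xα, h4, hik1, rfl, hLi⟩)))))
  · obtain ⟨i, hAi⟩ := Set.mem_iUnion.1 hA
    obtain ⟨p, xα, he, h4, hik, _⟩ := id hAi
    subst he
    exact Or.inr (Or.inr (Or.inr (Or.inr (Or.inr (Or.inr (Or.inr (Or.inr (Or.inl
      ⟨i, p, xα, h4, hik, rfl, hAi⟩))))))))
  · obtain ⟨i, hBi⟩ := Set.mem_iUnion.1 hB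
    obtain ⟨p, xα, he, h3, hik, _⟩ := id hBi
    subst he
    have : i = 3 ∨ (4 ≤ i ∧ i ≤ k - 2) := by omega
    rcases this with rfl | ⟨h4, hik1⟩
    · exact Or.inr (Or.inr (Or.inr (Or.inr (Or.inr (Or.inr (Or.inr (Or.inr (Or.inr
        (Or.inl ⟨p, xα, rfl, hBi⟩)))))))))
    · exact Or.inr (Or.inr (Or.inr (Or.inr (Or.inr (Or.inr (Or.inr (Or.inr (Or.inr
        (Or.inr (Or.inl ⟨i, p, xα, h4, hik1, rfl, hBi⟩))))))))))
  · rcases huv with h | h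
    · exact Or.inr (Or.inr (Or.inr (Or.inr (Or.inr (Or.inr (Or.inr (Or.inr (Or.inr
        (Or.inr (Or.inr (Or.inl h)))))))))))
    · exact Or.inr (Or.inr (Or.inr (Or.inr (Or.inr (Or.inr (Or.inr (Or.inr (Or.inr
        (Or.inr (Or.inr (Or.inr h)))))))))))

end Grand

section Grand2

variable {k d : ℕ} {S : Finset (Vec d)}

theorem fills_some {F : ℕ → Prop} {p : Fin k → Option (Vec d)}
    (hf : FillsS k d S F p) {j : Fin k} (hj : F (j:ℕ)) :
    p j = some (extractP p j) := by
  obtain ⟨a, _, he⟩ := (hf j).1 hj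
  exact extractP_eq he

/-- Uniform join: from any vertex of `G` to a spine vertex `C_s`, `2 ≤ s ≤ 4`,
in at most `s - 1` steps, with `bV` arbitrary. -/
theorem grandJoin (hk : 5 ≤ k) (hd : 0 < d) (hone : ones d ∈ S)
    {α : Vert k d} (hα : α ∈ VertexSet k d S)
    (bV : Fin k → Vec d) (hb : InS S bV) :
    ∃ aV : Fin k → Vec d, InS S aV ∧ ∃ h s : ℕ, 2 ≤ s ∧ s ≤ 4 ∧ h + 1 ≤ s ∧
      ∀ x : Fin (k-1) → Fin d, Mx k d aV bV x →
        DistLE (Adj k d S) α (CL k d s aV bV x) h := by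
  have ones1 : InS S (fun _ : Fin k => ones d) := fun _ => hone
  rcases sourceCases hk hα with ⟨p, xα, rfl, hm⟩ | ⟨p, xα, rfl, hm⟩ |
    ⟨p, xα, rfl, hm⟩ | ⟨p, xα, rfl, hm⟩ | ⟨i, p, xα, h4, hik, rfl, hm⟩ |
    ⟨i, p, xα, h4, hik, rfl, hm⟩ | ⟨p, xα, rfl, hm⟩ | ⟨p, xα, rfl, hm⟩ |
    ⟨i, p, xα, h4, hik, rfl, hm⟩ | ⟨p, xα, rfl, hm⟩ |
    ⟨i, p, xα, h4, hik, rfl, hm⟩ | rfl | rfl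
  · -- L1
    have hf := (setL1_elim hk hm).1
    exact ⟨extractP p, extractP_inS hf hone, 1, 2, by omega, by omega, by omega,
      fun x hx => joinL1 hk (extractP_inS hf hone) hb hx hm
        (fun j hj => fills_some hf (by omega))⟩
  · -- L2
    have hf := (setLmid_elim (le_refl 2) (by omega) hm).1
    exact ⟨extractP p, extractP_inS hf hone, 1, 2, by omega, by omega, by omega,
      fun x hx => joinL2 hk (extractP_inS hf hone) hb hx hm
        (fun j hj => fills_some hf (Or.inl hj))⟩
  · -- L3
    have hf := (setLmid_elim (by omega) (by omega) hm).1
    exact ⟨extractP p, extractP_inS hf hone, 2, 3, by omega, by omega, by omega,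
      fun x hx => joinL3 hk (extractP_inS hf hone) hb hx hm
        (fun j hj => fills_some hf (Or.inl hj))⟩
  · -- L'3
    have hf := (setL'_elim hm).2.2
    exact ⟨extractP p, extractP_inS hf hone, 2, 3, by omega, by omega, by omega,
      fun x hx => joinL'3 hk (extractP_inS hf hone) hb hx hm
        (fun j hj => fills_some hf (Or.inl hj))⟩
  · -- L mid
    have hf := (setLmid_elim (by omega) (by omega) hm).1
    exact ⟨extractP p, extractP_inS hf hone, 3, 4, by omega, by omega, by omega,
      fun x hx => joinLmid hk hd h4 hik (extractP_inS hf hone) hb hx (Or.inl hm)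
        (fun j hj => (hf j).1 (Or.inl hj)) (fun j hj => fills_some hf (Or.inl hj))⟩
  · -- L' mid
    have hf := (setL'_elim hm).2.2
    exact ⟨extractP p, extractP_inS hf hone, 3, 4, by omega, by omega, by omega,
      fun x hx => joinLmid hk hd h4 hik (extractP_inS hf hone) hb hx (Or.inr hm)
        (fun j hj => (hf j).1 (Or.inl hj)) (fun j hj => fills_some hf (Or.inl hj))⟩
  · -- L k
    exact ⟨fun _ => ones d, ones1, 3, 4, by omega, by omega, by omega,
      fun x hx => joinViaU hk ones1 hb hx (Or.inl hm)⟩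
  · -- L (k+1)
    exact ⟨fun _ => ones d, ones1, 3, 4, by omega, by omega, by omega,
      fun x hx => joinViaU hk ones1 hb hx (Or.inr hm)⟩
  · -- A i
    have hf := (setA_elim hm).2.2.1
    exact ⟨extractP p, extractP_inS hf hone, 2, 4, by omega, by omega, by omega,
      fun x hx => joinA hk h4 hik (extractP_inS hf hone) hb hx hm
        (fun j hj => fills_some hf hj)⟩
  · -- B 3
    exact ⟨fun _ => ones d, ones1, 2, 3, by omega, by omega, by omega,
      fun x hx => joinB3 hk ones1 hb hx hm⟩
  · -- B mid
    exact ⟨fun _ => ones d, ones1, 3, 4, by omega, by omega, by omega,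
      fun x hx => joinBmid hk hd h4 hik ones1 hb hx hm⟩
  · -- u
    exact ⟨fun _ => ones d, ones1, 2, 4, by omega, by omega, by omega,
      fun x hx => joinU hk ones1 hb hx⟩
  · -- v
    exact ⟨fun _ => ones d, ones1, 1, 2, by omega, by omega, by omega,
      fun x hx => joinV hk ones1 hb hx⟩

/-- Uniform exit: from a spine vertex `C_e`, `k-2 ≤ e ≤ k`, to any vertex of `G`,
in at most `k + 1 - e` steps, with `aV` arbitrary. -/
theorem grandExit (hk : 5 ≤ k) (hd : 0 < d) (hone : ones d ∈ S)
    {β : Vert k d} (hβ : β ∈ VertexSet k d S) :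
    ∃ bV : Fin k → Vec d, InS S bV ∧ ∃ t e : ℕ, k - 2 ≤ e ∧ e ≤ k ∧ e + t ≤ k + 1 ∧
      ∀ aV : Fin k → Vec d, InS S aV → ∀ x : Fin (k-1) → Fin d, Mx k d aV bV x →
        DistLE (Adj k d S) (CL k d e aV bV x) β t := by
  have ones1 : InS S (fun _ : Fin k => ones d) := fun _ => hone
  rcases sourceCases hk hβ with ⟨p, xβ, rfl, hm⟩ | ⟨p, xβ, rfl, hm⟩ |
    ⟨p, xβ, rfl, hm⟩ | ⟨p, xβ, rfl, hm⟩ | ⟨i, p, xβ, h4, hik, rfl, hm⟩ |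
    ⟨i, p, xβ, h4, hik, rfl, hm⟩ | ⟨p, xβ, rfl, hm⟩ | ⟨p, xβ, rfl, hm⟩ |
    ⟨i, p, xβ, h4, hik, rfl, hm⟩ | ⟨p, xβ, rfl, hm⟩ |
    ⟨i, p, xβ, h4, hik, rfl, hm⟩ | rfl | rfl
  · -- L1
    exact ⟨fun _ => ones d, ones1, 3, k-2, le_refl _, by omega, by omega,
      fun aV ha x hx => exitLow hk ha ones1 hx (Or.inl hm)⟩
  · -- L2
    exact ⟨fun _ => ones d, ones1, 3, k-2, le_refl _, by omega, by omega,
      fun aV ha x hx => exitLow hk ha ones1 hx (Or.inr hm)⟩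
  · -- L3
    have hf := (setLmid_elim (by omega) (by omega) hm).1
    exact ⟨extractP p, extractP_inS hf hone, 3, k-2, le_refl _, by omega, by omega,
      fun aV ha x hx => exitMid hk hd (by omega) (by omega) ha
        (extractP_inS hf hone) hx (Or.inl hm)
        (fun j hj => fills_some hf (Or.inr hj))⟩
  · -- L'3
    have hf := (setL'_elim hm).2.2
    exact ⟨extractP p, extractP_inS hf hone, 3, k-2, le_refl _, by omega, by omega,
      fun aV ha x hx => exitMid hk hd (by omega) (by omega) ha
        (extractP_inS hf hone) hx (Or.inr hm)
        (fun j hj => fills_some hf (Or.inr hj))⟩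
  · -- L mid (4 ≤ i ≤ k-1)
    have hf := (setLmid_elim (by omega) (by omega) hm).1
    have : i ≤ k - 2 ∨ i = k - 1 := by omega
    rcases this with hik2 | rfl
    · exact ⟨extractP p, extractP_inS hf hone, 3, k-2, le_refl _, by omega, by omega,
        fun aV ha x hx => exitMid hk hd (by omega) hik2 ha
          (extractP_inS hf hone) hx (Or.inl hm)
          (fun j hj => fills_some hf (Or.inr hj))⟩
    · exact ⟨extractP p, extractP_inS hf hone, 2, k-1, by omega, by omega, by omega,
        fun aV ha x hx => exitTop hk ha (extractP_inS hf hone) hx (Or.inl hm) hf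
          (fun j hj => fills_some hf (Or.inr (by omega)))⟩
  · -- L' mid
    have hf := (setL'_elim hm).2.2
    have : i ≤ k - 2 ∨ i = k - 1 := by omega
    rcases this with hik2 | rfl
    · exact ⟨extractP p, extractP_inS hf hone, 3, k-2, le_refl _, by omega, by omega,
        fun aV ha x hx => exitMid hk hd (by omega) hik2 ha
          (extractP_inS hf hone) hx (Or.inr hm)
          (fun j hj => fills_some hf (Or.inr hj))⟩
    · exact ⟨extractP p, extractP_inS hf hone, 2, k-1, by omega, by omega, by omega,
        fun aV ha x hx => exitTop hk ha (extractP_inS hf hone) hx (Or.inr hm) hf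
          (fun j hj => fills_some hf (Or.inr (by omega)))⟩
  · -- L k
    have hf := (setLmid_elim (by omega) (le_refl k) hm).1
    exact ⟨extractP p, extractP_inS hf hone, 1, k, by omega, le_refl _, by omega,
      fun aV ha x hx => exitLk hk ha (extractP_inS hf hone) hx hm
        (fun j hj => fills_some hf (Or.inr (by omega)))⟩
  · -- L (k+1)
    have hf := (setLtop_elim hk hm).1
    exact ⟨extractP p, extractP_inS hf hone, 1, k, by omega, le_refl _, by omega,
      fun aV ha x hx => exitLtop hk ha (extractP_inS hf hone) hx hm
        (fun j hj => fills_some hf (by omega))⟩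
  · -- A i
    have : i ≤ k - 2 ∨ i = k - 1 := by omega
    rcases this with hik2 | rfl
    · exact ⟨fun _ => ones d, ones1, 3, k-2, le_refl _, by omega, by omega,
        fun aV ha x hx => exitA hk hd h4 hik2 ha ones1 hx hm⟩
    · exact ⟨fun _ => ones d, ones1, 2, k-1, by omega, by omega, by omega,
        fun aV ha x hx => exitAtop hk ha ones1 hx hm⟩
  · -- B 3
    have hf := (setB_elim hm).2.2.1
    exact ⟨extractP p, extractP_inS hf hone, 2, k-2, le_refl _, by omega, by omega,
      fun aV ha x hx => exitB hk (by omega) (by omega) ha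
        (extractP_inS hf hone) hx hm (fun j hj => fills_some hf hj)⟩
  · -- B mid
    have hf := (setB_elim hm).2.2.1
    exact ⟨extractP p, extractP_inS hf hone, 2, k-2, le_refl _, by omega, by omega,
      fun aV ha x hx => exitB hk (by omega) hik ha
        (extractP_inS hf hone) hx hm (fun j hj => fills_some hf hj)⟩
  · -- u
    exact ⟨fun _ => ones d, ones1, 1, k, by omega, le_refl _, by omega,
      fun aV ha x hx => exitU hk ha ones1 hx⟩
  · -- v
    exact ⟨fun _ => ones d, ones1, 2, k-2, le_refl _, by omega, by omega,
      fun aV ha x hx => exitV hk ha ones1 hx⟩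

end Grand2

section K5Wrap

variable {k d : ℕ} {S : Finset (Vec d)} {aV bV : Fin k → Vec d} {x : Fin (k-1) → Fin d}
variable {p : Fin k → Option (Vec d)} {xβ : Fin (k-1) → Fin d}

theorem exitV5 (hk5 : k = 5)
    (ha : InS S aV) (hb : InS S bV) (hx : Mx k d aV bV x) :
    DistLE (Adj k d S) (CL k d 3 aV bV x) (Vert.vv : Vert k d) 2 := by
  have e32 : k - 2 = 3 := by omega
  have h := exitV (S := S) (by omega : 5 ≤ k) ha hb hx
  rwa [e32] at h

theorem exitLow5 (hk5 : k = 5) {β : Vert k d}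
    (ha : InS S aV) (hb : InS S bV) (hx : Mx k d aV bV x)
    (hmem : β ∈ setL k d S 1 ∨ β ∈ setL k d S 2) :
    DistLE (Adj k d S) (CL k d 3 aV bV x) β 3 := by
  have e32 : k - 2 = 3 := by omega
  have h := exitLow (by omega : 5 ≤ k) ha hb hx hmem
  rwa [e32] at h

theorem exitMid5 (hk5 : k = 5) (hd : 0 < d) {tg : Tag}
    (ha : InS S aV) (hb : InS S bV) (hx : Mx k d aV bV x)
    (hor : Vert.node tg p xβ ∈ setL k d S 3 ∨ Vert.node tg p xβ ∈ setL' k d S 3)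
    (hm : ∀ j : Fin k, k - 3 + 2 ≤ (j:ℕ) → p j = some (bV j)) :
    DistLE (Adj k d S) (CL k d 3 aV bV x) (Vert.node tg p xβ) 3 := by
  have e32 : k - 2 = 3 := by omega
  have h := exitMid (by omega : 5 ≤ k) hd (by omega : 3 ≤ 3) (by omega : 3 ≤ k - 2)
    ha hb hx hor hm
  rwa [e32] at h

theorem exitB5 (hk5 : k = 5)
    (ha : InS S aV) (hb : InS S bV) (hx : Mx k d aV bV x)
    (hmem : Vert.node (Tag.B 3) p xβ ∈ setB k d S 3)
    (hm : ∀ j : Fin k, k - 3 + 2 ≤ (j:ℕ) → p j = some (bV j)) :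
    DistLE (Adj k d S) (CL k d 3 aV bV x) (Vert.node (Tag.B 3) p xβ) 2 := by
  have e32 : k - 2 = 3 := by omega
  have h := exitB (by omega : 5 ≤ k) (by omega : 3 ≤ 3) (by omega : 3 ≤ k - 2)
    ha hb hx hmem hm
  rwa [e32] at h

end K5Wrap

section K5

variable {k d : ℕ} {S : Finset (Vec d)}

/-- `k = 5`: distance to `v` is at most `k`. -/
theorem k5_V (hk5 : k = 5) (hd : 0 < d) (hone : ones d ∈ S)
    (hno : ∀ f : Fin k → Vec d, (∀ j, f j ∈ S) → ∃ x : Fin d, ∀ j, f j x = true)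
    {α : Vert k d} (hα : α ∈ VertexSet k d S) :
    DistLE (Adj k d S) α (Vert.vv : Vert k d) k := by
  have hk : 5 ≤ k := by omega
  have ones1 : InS S (fun _ : Fin k => ones d) := fun _ => hone
  rcases sourceCases hk hα with ⟨p, xα, rfl, hm⟩ | ⟨p, xα, rfl, hm⟩ |
    ⟨p, xα, rfl, hm⟩ | ⟨p, xα, rfl, hm⟩ | ⟨i, p, xα, h4, hik, rfl, hm⟩ |
    ⟨i, p, xα, h4, hik, rfl, hm⟩ | ⟨p, xα, rfl, hm⟩ | ⟨p, xα, rfl, hm⟩ |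
    ⟨i, p, xα, h4, hik, rfl, hm⟩ | ⟨p, xα, rfl, hm⟩ |
    ⟨i, p, xα, h4, hik, rfl, hm⟩ | rfl | rfl
  · -- L1
    have hf := (setL1_elim hk hm).1
    have ha := extractP_inS hf hone
    obtain ⟨x, hx⟩ := masterExists hno ha ones1
    refine distLE_mono (by omega : 1 + (1 + 2) ≤ k) (distLE_trans
      (joinL1 hk ha ones1 hx hm (fun j hj => fills_some hf (by omega)))
      (distLE_trans (spine_up 2 (by omega) ha ones1 hx 3 (by omega) (by omega))
        (exitV5 hk5 ha ones1 hx)))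
  · -- L2
    have hf := (setLmid_elim (le_refl 2) (by omega) hm).1
    have ha := extractP_inS hf hone
    obtain ⟨x, hx⟩ := masterExists hno ha ones1
    refine distLE_mono (by omega : 1 + (1 + 2) ≤ k) (distLE_trans
      (joinL2 hk ha ones1 hx hm (fun j hj => fills_some hf (Or.inl hj)))
      (distLE_trans (spine_up 2 (by omega) ha ones1 hx 3 (by omega) (by omega))
        (exitV5 hk5 ha ones1 hx)))
  · -- L3
    have hf := (setLmid_elim (by omega) (by omega) hm).1
    have ha := extractP_inS hf hone
    obtain ⟨x, hx⟩ := masterExists hno ha ones1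
    refine distLE_mono (by omega : 2 + 2 ≤ k) (distLE_trans
      (joinL3 hk ha ones1 hx hm (fun j hj => fills_some hf (Or.inl hj)))
      (exitV5 hk5 ha ones1 hx))
  · -- L'3
    have hf := (setL'_elim hm).2.2
    have ha := extractP_inS hf hone
    obtain ⟨x, hx⟩ := masterExists hno ha ones1
    refine distLE_mono (by omega : 2 + 2 ≤ k) (distLE_trans
      (joinL'3 hk ha ones1 hx hm (fun j hj => fills_some hf (Or.inl hj)))
      (exitV5 hk5 ha ones1 hx))
  · -- L4 via own spine
    have hi : i = 4 := by omega
    subst hi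
    obtain ⟨aV, bV, ha, hb, hx, heq⟩ := joinOwn hk hone (by omega) (by omega) hm
    rw [heq]
    refine distLE_mono (by omega : (4-3) + 2 ≤ k) (distLE_trans
      (spine_down 3 (by omega) ha hb hx 4 (by omega) (by omega))
      (exitV5 hk5 ha hb hx))
  · -- L'4 via own spine
    have hi : i = 4 := by omega
    subst hi
    have hf := (setL'_elim hm).2.2
    set aV : Fin k → Vec d :=
      fun j => if (j:ℕ) < k - 4 then extractP p j else ones d with haV
    set bV : Fin k → Vec d :=
      fun j => if k - 4 + 2 ≤ (j:ℕ) then extractP p j else ones d with hbV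
    have ha : InS S aV := by
      intro j; simp only [haV]; split
      · exact extractP_inS hf hone j
      · exact hone
    have hb : InS S bV := by
      intro j; simp only [hbV]; split
      · exact extractP_inS hf hone j
      · exact hone
    obtain ⟨x, hx⟩ := masterExists hno ha hb
    refine distLE_mono (by omega : 1 + ((4-3) + 2) ≤ k) (distLE_trans
      (joinL'own hk ha hb hx hm
        (fun j hj => by
          simp only [haV]; rw [if_pos hj]; exact fills_some hf (Or.inl hj))
        (fun j hj => by
          simp only [hbV]; rw [if_pos hj]; exact fills_some hf (Or.inr hj)))
      (distLE_trans (spine_down 3 (by omega) ha hb hx 4 (by omega) (by omega))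
        (exitV5 hk5 ha hb hx)))
  · -- Lk via own spine
    obtain ⟨aV, bV, ha, hb, hx, heq⟩ := joinOwn hk hone (by omega) (le_refl k) hm
    rw [heq]
    refine distLE_mono (by omega : (k-3) + 2 ≤ k) (distLE_trans
      (spine_down 3 (by omega) ha hb hx k (by omega) (le_refl k))
      (exitV5 hk5 ha hb hx))
  · -- L(k+1)
    have hf := (setLtop_elim hk hm).1
    set bV : Fin k → Vec d :=
      fun j => if 2 ≤ (j:ℕ) then extractP p j else ones d with hbV
    have hb : InS S bV := by
      intro j; simp only [hbV]; split
      · exact extractP_inS hf hone j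
      · exact hone
    obtain ⟨x, hx⟩ := masterExists hno ones1 hb
    refine distLE_mono (by omega : 1 + ((k-3) + 2) ≤ k) (distLE_trans
      (joinLtop hk ones1 hb hx hm (fun j hj => by
        simp only [hbV]; rw [if_pos hj]; exact fills_some hf (by omega)))
      (distLE_trans (spine_down 3 (by omega) ones1 hb hx k (by omega) (le_refl k))
        (exitV5 hk5 ones1 hb hx)))
  · -- A4
    have hi : i = 4 := by omega
    subst hi
    have hf := (setA_elim hm).2.2.1
    have ha := extractP_inS hf hone
    obtain ⟨x, hx⟩ := masterExists hno ha ones1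
    refine distLE_mono (by omega : 2 + ((4-3) + 2) ≤ k) (distLE_trans
      (joinA hk (by omega) (by omega) ha ones1 hx hm (fun j hj => fills_some hf hj))
      (distLE_trans (spine_down 3 (by omega) ha ones1 hx 4 (by omega) (by omega))
        (exitV5 hk5 ha ones1 hx)))
  · -- B3
    obtain ⟨x, hx⟩ := masterExists hno ones1 ones1
    refine distLE_mono (by omega : 2 + 2 ≤ k) (distLE_trans
      (joinB3 hk ones1 ones1 hx hm)
      (exitV5 hk5 ones1 ones1 hx))
  · -- B mid : impossible for k = 5
    omega
  · -- u
    obtain ⟨x, hx⟩ := masterExists hno ones1 ones1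
    refine distLE_mono (by omega : 2 + ((4-3) + 2) ≤ k) (distLE_trans
      (joinU hk ones1 ones1 hx)
      (distLE_trans (spine_down 3 (by omega) ones1 ones1 hx 4 (by omega) (by omega))
        (exitV5 hk5 ones1 ones1 hx)))
  · -- v
    exact distLE_mono (Nat.zero_le k) (distLE_refl _)

end K5

section K5b

variable {k d : ℕ} {S : Finset (Vec d)} {aV bV : Fin k → Vec d} {x : Fin (k-1) → Fin d}
variable {p : Fin k → Option (Vec d)} {xβ : Fin (k-1) → Fin d}

theorem exitDir12 (hk : 5 ≤ k) {tg : Tag}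
    (ha : InS S aV) (hb : InS S bV) (hx : Mx k d aV bV x)
    (hor : Vert.node tg p xβ ∈ setL k d S 1 ∨ Vert.node tg p xβ ∈ setL k d S 2)
    (hm : ∀ j : Fin k, (j:ℕ) < k - 2 → p j = some (aV j)) :
    DistLE (Adj k d S) (CL k d 2 aV bV x) (Vert.node tg p xβ) 1 := by
  rcases hor with hmem | hmem
  · have htg : tg = Tag.L 1 := by
      obtain ⟨_, _, he, _⟩ := hmem
      injection he with h1 _ _
    subst htg
    exact exitL1dir hk ha hb hx hmem hm
  · have htg : tg = Tag.L 2 := by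
      obtain ⟨_, _, he, _⟩ := hmem
      injection he with h1 _ _
    subst htg
    exact exitL2dir hk ha hb hx hmem hm

/-- `k = 5`: distance to `L_1 ∪ L_2` is at most `k`. -/
theorem k5_low12 (hk5 : k = 5) (hd : 0 < d) (hone : ones d ∈ S)
    (hno : ∀ f : Fin k → Vec d, (∀ j, f j ∈ S) → ∃ x : Fin d, ∀ j, f j x = true)
    {α : Vert k d} (hα : α ∈ VertexSet k d S) {tg : Tag}
    (hor : Vert.node tg p xβ ∈ setL k d S 1 ∨ Vert.node tg p xβ ∈ setL k d S 2) :
    DistLE (Adj k d S) α (Vert.node tg p xβ) k := by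
  have hk : 5 ≤ k := by omega
  have ones1 : InS S (fun _ : Fin k => ones d) := fun _ => hone
  have hfβ : ∀ j : Fin k, (j:ℕ) < k - 2 → p j = some (extractP p j) := by
    rcases hor with hmem | hmem
    · have htg : tg = Tag.L 1 := by
        obtain ⟨_, _, he, _⟩ := hmem
        injection he with h1 _ _
      subst htg
      exact fun j hj => fills_some (setL1_elim hk hmem).1 (by omega)
    · have htg : tg = Tag.L 2 := by
        obtain ⟨_, _, he, _⟩ := hmem
        injection he with h1 _ _
      subst htg
      exact fun j hj => fills_some (setLmid_elim (le_refl 2) (by omega) hmem).1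
        (Or.inl hj)
  have haB : InS S (extractP p) := by
    rcases hor with hmem | hmem
    · have htg : tg = Tag.L 1 := by
        obtain ⟨_, _, he, _⟩ := hmem
        injection he with h1 _ _
      subst htg
      exact extractP_inS (setL1_elim hk hmem).1 hone
    · have htg : tg = Tag.L 2 := by
        obtain ⟨_, _, he, _⟩ := hmem
        injection he with h1 _ _
      subst htg
      exact extractP_inS (setLmid_elim (le_refl 2) (by omega) hmem).1 hone
  rcases sourceCases hk hα with ⟨q, xα, rfl, hm⟩ | ⟨q, xα, rfl, hm⟩ |
    ⟨q, xα, rfl, hm⟩ | ⟨q, xα, rfl, hm⟩ | ⟨i, q, xα, h4, hik, rfl, hm⟩ |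
    ⟨i, q, xα, h4, hik, rfl, hm⟩ | ⟨q, xα, rfl, hm⟩ | ⟨q, xα, rfl, hm⟩ |
    ⟨i, q, xα, h4, hik, rfl, hm⟩ | ⟨q, xα, rfl, hm⟩ |
    ⟨i, q, xα, h4, hik, rfl, hm⟩ | rfl | rfl
  · -- L1
    have hf := (setL1_elim hk hm).1
    have ha := extractP_inS hf hone
    obtain ⟨x, hx⟩ := masterExists hno ha ones1
    refine distLE_mono (by omega : 1 + (1 + 3) ≤ k) (distLE_trans
      (joinL1 hk ha ones1 hx hm (fun j hj => fills_some hf (by omega)))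
      (distLE_trans (spine_up 2 (by omega) ha ones1 hx 3 (by omega) (by omega))
        (exitLow5 hk5 ha ones1 hx hor)))
  · -- L2
    have hf := (setLmid_elim (le_refl 2) (by omega) hm).1
    have ha := extractP_inS hf hone
    obtain ⟨x, hx⟩ := masterExists hno ha ones1
    refine distLE_mono (by omega : 1 + (1 + 3) ≤ k) (distLE_trans
      (joinL2 hk ha ones1 hx hm (fun j hj => fills_some hf (Or.inl hj)))
      (distLE_trans (spine_up 2 (by omega) ha ones1 hx 3 (by omega) (by omega))
        (exitLow5 hk5 ha ones1 hx hor)))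
  · -- L3
    have hf := (setLmid_elim (by omega) (by omega) hm).1
    have ha := extractP_inS hf hone
    obtain ⟨x, hx⟩ := masterExists hno ha ones1
    refine distLE_mono (by omega : 2 + 3 ≤ k) (distLE_trans
      (joinL3 hk ha ones1 hx hm (fun j hj => fills_some hf (Or.inl hj)))
      (exitLow5 hk5 ha ones1 hx hor))
  · -- L'3
    have hf := (setL'_elim hm).2.2
    have ha := extractP_inS hf hone
    obtain ⟨x, hx⟩ := masterExists hno ha ones1
    refine distLE_mono (by omega : 2 + 3 ≤ k) (distLE_trans
      (joinL'3 hk ha ones1 hx hm (fun j hj => fills_some hf (Or.inl hj)))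
      (exitLow5 hk5 ha ones1 hx hor))
  · -- L4 via own spine
    have hi : i = 4 := by omega
    subst hi
    obtain ⟨aV, bV, ha, hb, hx, heq⟩ := joinOwn hk hone (by omega) (by omega) hm
    rw [heq]
    refine distLE_mono (by omega : (4-3) + 3 ≤ k) (distLE_trans
      (spine_down 3 (by omega) ha hb hx 4 (by omega) (by omega))
      (exitLow5 hk5 ha hb hx hor))
  · -- L'4 via own spine
    have hi : i = 4 := by omega
    subst hi
    have hf := (setL'_elim hm).2.2
    set aVα : Fin k → Vec d :=
      fun j => if (j:ℕ) < k - 4 then extractP q j else ones d with haV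
    set bVα : Fin k → Vec d :=
      fun j => if k - 4 + 2 ≤ (j:ℕ) then extractP q j else ones d with hbV
    have ha : InS S aVα := by
      intro j; simp only [haV]; split
      · exact extractP_inS hf hone j
      · exact hone
    have hb : InS S bVα := by
      intro j; simp only [hbV]; split
      · exact extractP_inS hf hone j
      · exact hone
    obtain ⟨x, hx⟩ := masterExists hno ha hb
    refine distLE_mono (by omega : 1 + ((4-3) + 3) ≤ k) (distLE_trans
      (joinL'own hk ha hb hx hm
        (fun j hj => by
          simp only [haV]; rw [if_pos hj]; exact fills_some hf (Or.inl hj))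
        (fun j hj => by
          simp only [hbV]; rw [if_pos hj]; exact fills_some hf (Or.inr hj)))
      (distLE_trans (spine_down 3 (by omega) ha hb hx 4 (by omega) (by omega))
        (exitLow5 hk5 ha hb hx hor)))
  · -- Lk via own spine
    obtain ⟨aV, bV, ha, hb, hx, heq⟩ := joinOwn hk hone (by omega) (le_refl k) hm
    rw [heq]
    refine distLE_mono (by omega : (k-3) + 3 ≤ k) (distLE_trans
      (spine_down 3 (by omega) ha hb hx k (by omega) (le_refl k))
      (exitLow5 hk5 ha hb hx hor))
  · -- L(k+1) : descend to C_2, direct exit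
    have hf := (setLtop_elim hk hm).1
    set bVα : Fin k → Vec d :=
      fun j => if 2 ≤ (j:ℕ) then extractP q j else ones d with hbV
    have hb : InS S bVα := by
      intro j; simp only [hbV]; split
      · exact extractP_inS hf hone j
      · exact hone
    obtain ⟨x, hx⟩ := masterExists hno haB hb
    refine distLE_mono (by omega : 1 + ((k-2) + 1) ≤ k) (distLE_trans
      (joinLtop hk haB hb hx hm (fun j hj => by
        simp only [hbV]; rw [if_pos hj]; exact fills_some hf (by omega)))
      (distLE_trans (spine_down 2 (by omega) haB hb hx k (by omega) (le_refl k))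
        (exitDir12 hk haB hb hx hor hfβ)))
  · -- A4 : free join, direct exit
    have hi : i = 4 := by omega
    subst hi
    obtain ⟨x, hx⟩ := masterExists hno haB ones1
    refine distLE_mono (by omega : 2 + ((4-2) + 1) ≤ k) (distLE_trans
      (joinA5 hk5 haB ones1 hx hm)
      (distLE_trans (spine_down 2 (by omega) haB ones1 hx 4 (by omega) (by omega))
        (exitDir12 hk haB ones1 hx hor hfβ)))
  · -- B3
    obtain ⟨x, hx⟩ := masterExists hno ones1 ones1
    refine distLE_mono (by omega : 2 + 3 ≤ k) (distLE_trans
      (joinB3 hk ones1 ones1 hx hm)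
      (exitLow5 hk5 ones1 ones1 hx hor))
  · -- B mid : impossible
    omega
  · -- u
    obtain ⟨x, hx⟩ := masterExists hno haB ones1
    refine distLE_mono (by omega : 2 + ((4-2) + 1) ≤ k) (distLE_trans
      (joinU hk haB ones1 hx)
      (distLE_trans (spine_down 2 (by omega) haB ones1 hx 4 (by omega) (by omega))
        (exitDir12 hk haB ones1 hx hor hfβ)))
  · -- v
    exact distLE_mono (by omega : 1 ≤ k)
      (distLE_adj (adj_of_fixedE (Or.inr (Or.inl ⟨rfl, hor⟩))))

end K5b

section K5c

variable {k d : ℕ} {S : Finset (Vec d)}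
variable {p : Fin k → Option (Vec d)} {xβ : Fin (k-1) → Fin d}

/-- `k = 5`: distance to `L_3 ∪ L'_3` is at most `k`. -/
theorem k5_low3 (hk5 : k = 5) (hd : 0 < d) (hone : ones d ∈ S)
    (hno : ∀ f : Fin k → Vec d, (∀ j, f j ∈ S) → ∃ x : Fin d, ∀ j, f j x = true)
    {α : Vert k d} (hα : α ∈ VertexSet k d S) {tg : Tag}
    (hor : Vert.node tg p xβ ∈ setL k d S 3 ∨ Vert.node tg p xβ ∈ setL' k d S 3) :
    DistLE (Adj k d S) α (Vert.node tg p xβ) k := by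
  have hk : 5 ≤ k := by omega
  have ones1 : InS S (fun _ : Fin k => ones d) := fun _ => hone
  have hfβ : FillsS k d S (fun j => j < k - 3 ∨ k - 3 + 2 ≤ j) p := by
    rcases hor with hmem | hmem
    · have htg : tg = Tag.L 3 := by
        obtain ⟨_, _, he, _⟩ := hmem
        injection he with h1 _ _
      subst htg
      exact (setLmid_elim (by omega) (by omega) hmem).1
    · have htg : tg = Tag.L' 3 := by
        obtain ⟨_, _, he, _⟩ := hmem
        injection he with h1 _ _
      subst htg
      exact (setL'_elim hmem).2.2
  have haB : InS S (extractP p) := extractP_inS hfβ hone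
  have hmβb : ∀ j : Fin k, k - 3 + 2 ≤ (j:ℕ) → p j = some (extractP p j) :=
    fun j hj => fills_some hfβ (Or.inr hj)
  have hmβa : ∀ j : Fin k, (j:ℕ) < k - 3 → p j = some (extractP p j) :=
    fun j hj => fills_some hfβ (Or.inl hj)
  rcases sourceCases hk hα with ⟨q, xα, rfl, hm⟩ | ⟨q, xα, rfl, hm⟩ |
    ⟨q, xα, rfl, hm⟩ | ⟨q, xα, rfl, hm⟩ | ⟨i, q, xα, h4, hik, rfl, hm⟩ |
    ⟨i, q, xα, h4, hik, rfl, hm⟩ | ⟨q, xα, rfl, hm⟩ | ⟨q, xα, rfl, hm⟩ |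
    ⟨i, q, xα, h4, hik, rfl, hm⟩ | ⟨q, xα, rfl, hm⟩ |
    ⟨i, q, xα, h4, hik, rfl, hm⟩ | rfl | rfl
  · -- L1
    have hf := (setL1_elim hk hm).1
    have ha := extractP_inS hf hone
    obtain ⟨x, hx⟩ := masterExists hno ha haB
    refine distLE_mono (by omega : 1 + (1 + 3) ≤ k) (distLE_trans
      (joinL1 hk ha haB hx hm (fun j hj => fills_some hf (by omega)))
      (distLE_trans (spine_up 2 (by omega) ha haB hx 3 (by omega) (by omega))
        (exitMid5 hk5 hd ha haB hx hor hmβb)))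
  · -- L2
    have hf := (setLmid_elim (le_refl 2) (by omega) hm).1
    have ha := extractP_inS hf hone
    obtain ⟨x, hx⟩ := masterExists hno ha haB
    refine distLE_mono (by omega : 1 + (1 + 3) ≤ k) (distLE_trans
      (joinL2 hk ha haB hx hm (fun j hj => fills_some hf (Or.inl hj)))
      (distLE_trans (spine_up 2 (by omega) ha haB hx 3 (by omega) (by omega))
        (exitMid5 hk5 hd ha haB hx hor hmβb)))
  · -- L3
    have hf := (setLmid_elim (by omega) (by omega) hm).1
    have ha := extractP_inS hf hone
    obtain ⟨x, hx⟩ := masterExists hno ha haB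
    refine distLE_mono (by omega : 2 + 3 ≤ k) (distLE_trans
      (joinL3 hk ha haB hx hm (fun j hj => fills_some hf (Or.inl hj)))
      (exitMid5 hk5 hd ha haB hx hor hmβb))
  · -- L'3
    have hf := (setL'_elim hm).2.2
    have ha := extractP_inS hf hone
    obtain ⟨x, hx⟩ := masterExists hno ha haB
    refine distLE_mono (by omega : 2 + 3 ≤ k) (distLE_trans
      (joinL'3 hk ha haB hx hm (fun j hj => fills_some hf (Or.inl hj)))
      (exitMid5 hk5 hd ha haB hx hor hmβb))
  · -- L4 via own spine, exit14
    have hi : i = 4 := by omega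
    subst hi
    obtain ⟨aV, bV, ha, hb, hx, heq⟩ := joinOwn hk hone (by omega) (by omega) hm
    rw [heq]
    refine distLE_mono (by omega : (4-3) + 3 ≤ k) (distLE_trans
      (spine_down 3 (by omega) ha hb hx 4 (by omega) (by omega))
      (exit14 hk5 hd ha hb hx hor hfβ))
  · -- L'4 via own spine, exit14
    have hi : i = 4 := by omega
    subst hi
    have hf := (setL'_elim hm).2.2
    set aVα : Fin k → Vec d :=
      fun j => if (j:ℕ) < k - 4 then extractP q j else ones d with haV
    set bVα : Fin k → Vec d :=
      fun j => if k - 4 + 2 ≤ (j:ℕ) then extractP q j else ones d with hbV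
    have ha : InS S aVα := by
      intro j; simp only [haV]; split
      · exact extractP_inS hf hone j
      · exact hone
    have hb : InS S bVα := by
      intro j; simp only [hbV]; split
      · exact extractP_inS hf hone j
      · exact hone
    obtain ⟨x, hx⟩ := masterExists hno ha hb
    refine distLE_mono (by omega : 1 + ((4-3) + 3) ≤ k) (distLE_trans
      (joinL'own hk ha hb hx hm
        (fun j hj => by
          simp only [haV]; rw [if_pos hj]; exact fills_some hf (Or.inl hj))
        (fun j hj => by
          simp only [hbV]; rw [if_pos hj]; exact fills_some hf (Or.inr hj)))
      (distLE_trans (spine_down 3 (by omega) ha hb hx 4 (by omega) (by omega))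
        (exit14 hk5 hd ha hb hx hor hfβ)))
  · -- Lk via own spine, exit14
    obtain ⟨aV, bV, ha, hb, hx, heq⟩ := joinOwn hk hone (by omega) (le_refl k) hm
    rw [heq]
    refine distLE_mono (by omega : (k-3) + 3 ≤ k) (distLE_trans
      (spine_down 3 (by omega) ha hb hx k (by omega) (le_refl k))
      (exit14 hk5 hd ha hb hx hor hfβ))
  · -- L(k+1) : aV from β, exitL3dir
    have hf := (setLtop_elim hk hm).1
    set bVα : Fin k → Vec d :=
      fun j => if 2 ≤ (j:ℕ) then extractP q j else ones d with hbV
    have hb : InS S bVα := by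
      intro j; simp only [hbV]; split
      · exact extractP_inS hf hone j
      · exact hone
    obtain ⟨x, hx⟩ := masterExists hno haB hb
    refine distLE_mono (by omega : 1 + ((k-3) + 2) ≤ k) (distLE_trans
      (joinLtop hk haB hb hx hm (fun j hj => by
        simp only [hbV]; rw [if_pos hj]; exact fills_some hf (by omega)))
      (distLE_trans (spine_down 3 (by omega) haB hb hx k (by omega) (le_refl k))
        (exitL3dir hk haB hb hx hor hfβ hmβa)))
  · -- A4 : free join, exitL3dir
    have hi : i = 4 := by omega
    subst hi
    obtain ⟨x, hx⟩ := masterExists hno haB ones1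
    refine distLE_mono (by omega : 2 + ((4-3) + 2) ≤ k) (distLE_trans
      (joinA5 hk5 haB ones1 hx hm)
      (distLE_trans (spine_down 3 (by omega) haB ones1 hx 4 (by omega) (by omega))
        (exitL3dir hk haB ones1 hx hor hfβ hmβa)))
  · -- B3
    obtain ⟨x, hx⟩ := masterExists hno ones1 haB
    refine distLE_mono (by omega : 2 + 3 ≤ k) (distLE_trans
      (joinB3 hk ones1 haB hx hm)
      (exitMid5 hk5 hd ones1 haB hx hor hmβb))
  · -- B mid : impossible
    omega
  · -- u
    obtain ⟨x, hx⟩ := masterExists hno haB ones1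
    refine distLE_mono (by omega : 2 + ((4-3) + 2) ≤ k) (distLE_trans
      (joinU hk haB ones1 hx)
      (distLE_trans (spine_down 3 (by omega) haB ones1 hx 4 (by omega) (by omega))
        (exitL3dir hk haB ones1 hx hor hfβ hmβa)))
  · -- v
    obtain ⟨x, hx⟩ := masterExists hno ones1 haB
    refine distLE_mono (by omega : 1 + (1 + 3) ≤ k) (distLE_trans
      (joinV hk ones1 haB hx)
      (distLE_trans (spine_up 2 (by omega) ones1 haB hx 3 (by omega) (by omega))
        (exitMid5 hk5 hd ones1 haB hx hor hmβb)))

/-- `k = 5`: distance to `B_3` is at most `k`. -/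
theorem k5_B3 (hk5 : k = 5) (hd : 0 < d) (hone : ones d ∈ S)
    (hno : ∀ f : Fin k → Vec d, (∀ j, f j ∈ S) → ∃ x : Fin d, ∀ j, f j x = true)
    {α : Vert k d} (hα : α ∈ VertexSet k d S)
    (hmem : Vert.node (Tag.B 3) p xβ ∈ setB k d S 3) :
    DistLE (Adj k d S) α (Vert.node (Tag.B 3) p xβ) k := by
  have hk : 5 ≤ k := by omega
  have ones1 : InS S (fun _ : Fin k => ones d) := fun _ => hone
  have hfβ := (setB_elim hmem).2.2.1
  have haB : InS S (extractP p) := extractP_inS hfβ hone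
  have hmβb : ∀ j : Fin k, k - 3 + 2 ≤ (j:ℕ) → p j = some (extractP p j) :=
    fun j hj => fills_some hfβ hj
  rcases sourceCases hk hα with ⟨q, xα, rfl, hm⟩ | ⟨q, xα, rfl, hm⟩ |
    ⟨q, xα, rfl, hm⟩ | ⟨q, xα, rfl, hm⟩ | ⟨i, q, xα, h4, hik, rfl, hm⟩ |
    ⟨i, q, xα, h4, hik, rfl, hm⟩ | ⟨q, xα, rfl, hm⟩ | ⟨q, xα, rfl, hm⟩ |
    ⟨i, q, xα, h4, hik, rfl, hm⟩ | ⟨q, xα, rfl, hm⟩ |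
    ⟨i, q, xα, h4, hik, rfl, hm⟩ | rfl | rfl
  · -- L1
    have hf := (setL1_elim hk hm).1
    have ha := extractP_inS hf hone
    obtain ⟨x, hx⟩ := masterExists hno ha haB
    refine distLE_mono (by omega : 1 + (1 + 2) ≤ k) (distLE_trans
      (joinL1 hk ha haB hx hm (fun j hj => fills_some hf (by omega)))
      (distLE_trans (spine_up 2 (by omega) ha haB hx 3 (by omega) (by omega))
        (exitB5 hk5 ha haB hx hmem hmβb)))
  · -- L2
    have hf := (setLmid_elim (le_refl 2) (by omega) hm).1
    have ha := extractP_inS hf hone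
    obtain ⟨x, hx⟩ := masterExists hno ha haB
    refine distLE_mono (by omega : 1 + (1 + 2) ≤ k) (distLE_trans
      (joinL2 hk ha haB hx hm (fun j hj => fills_some hf (Or.inl hj)))
      (distLE_trans (spine_up 2 (by omega) ha haB hx 3 (by omega) (by omega))
        (exitB5 hk5 ha haB hx hmem hmβb)))
  · -- L3
    have hf := (setLmid_elim (by omega) (by omega) hm).1
    have ha := extractP_inS hf hone
    obtain ⟨x, hx⟩ := masterExists hno ha haB
    refine distLE_mono (by omega : 2 + 2 ≤ k) (distLE_trans
      (joinL3 hk ha haB hx hm (fun j hj => fills_some hf (Or.inl hj)))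
      (exitB5 hk5 ha haB hx hmem hmβb))
  · -- L'3
    have hf := (setL'_elim hm).2.2
    have ha := extractP_inS hf hone
    obtain ⟨x, hx⟩ := masterExists hno ha haB
    refine distLE_mono (by omega : 2 + 2 ≤ k) (distLE_trans
      (joinL'3 hk ha haB hx hm (fun j hj => fills_some hf (Or.inl hj)))
      (exitB5 hk5 ha haB hx hmem hmβb))
  · -- L4 via own spine, exitB3via5
    have hi : i = 4 := by omega
    subst hi
    obtain ⟨aV, bV, ha, hb, hx, heq⟩ := joinOwn hk hone (by omega) (by omega) hm
    rw [heq]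
    refine distLE_mono (by omega : (4-3) + 2 ≤ k) (distLE_trans
      (spine_down 3 (by omega) ha hb hx 4 (by omega) (by omega))
      (exitB3via5 hk5 ha hb hx hmem))
  · -- L'4 via own spine
    have hi : i = 4 := by omega
    subst hi
    have hf := (setL'_elim hm).2.2
    set aVα : Fin k → Vec d :=
      fun j => if (j:ℕ) < k - 4 then extractP q j else ones d with haV
    set bVα : Fin k → Vec d :=
      fun j => if k - 4 + 2 ≤ (j:ℕ) then extractP q j else ones d with hbV
    have ha : InS S aVα := by
      intro j; simp only [haV]; split
      · exact extractP_inS hf hone j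
      · exact hone
    have hb : InS S bVα := by
      intro j; simp only [hbV]; split
      · exact extractP_inS hf hone j
      · exact hone
    obtain ⟨x, hx⟩ := masterExists hno ha hb
    refine distLE_mono (by omega : 1 + ((4-3) + 2) ≤ k) (distLE_trans
      (joinL'own hk ha hb hx hm
        (fun j hj => by
          simp only [haV]; rw [if_pos hj]; exact fills_some hf (Or.inl hj))
        (fun j hj => by
          simp only [hbV]; rw [if_pos hj]; exact fills_some hf (Or.inr hj)))
      (distLE_trans (spine_down 3 (by omega) ha hb hx 4 (by omega) (by omega))
        (exitB3via5 hk5 ha hb hx hmem)))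
  · -- Lk via own spine
    obtain ⟨aV, bV, ha, hb, hx, heq⟩ := joinOwn hk hone (by omega) (le_refl k) hm
    rw [heq]
    refine distLE_mono (by omega : (k-3) + 2 ≤ k) (distLE_trans
      (spine_down 3 (by omega) ha hb hx k (by omega) (le_refl k))
      (exitB3via5 hk5 ha hb hx hmem))
  · -- L(k+1)
    have hf := (setLtop_elim hk hm).1
    set bVα : Fin k → Vec d :=
      fun j => if 2 ≤ (j:ℕ) then extractP q j else ones d with hbV
    have hb : InS S bVα := by
      intro j; simp only [hbV]; split
      · exact extractP_inS hf hone j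
      · exact hone
    obtain ⟨x, hx⟩ := masterExists hno ones1 hb
    refine distLE_mono (by omega : 1 + ((k-3) + 2) ≤ k) (distLE_trans
      (joinLtop hk ones1 hb hx hm (fun j hj => by
        simp only [hbV]; rw [if_pos hj]; exact fills_some hf (by omega)))
      (distLE_trans (spine_down 3 (by omega) ones1 hb hx k (by omega) (le_refl k))
        (exitB3via5 hk5 ones1 hb hx hmem)))
  · -- A4
    have hi : i = 4 := by omega
    subst hi
    have hf := (setA_elim hm).2.2.1
    have ha := extractP_inS hf hone
    obtain ⟨x, hx⟩ := masterExists hno ha haB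
    refine distLE_mono (by omega : 2 + ((4-3) + 2) ≤ k) (distLE_trans
      (joinA hk (by omega) (by omega) ha haB hx hm (fun j hj => fills_some hf hj))
      (distLE_trans (spine_down 3 (by omega) ha haB hx 4 (by omega) (by omega))
        (exitB5 hk5 ha haB hx hmem hmβb)))
  · -- B3 source
    obtain ⟨x, hx⟩ := masterExists hno ones1 haB
    refine distLE_mono (by omega : 2 + 2 ≤ k) (distLE_trans
      (joinB3 hk ones1 haB hx hm)
      (exitB5 hk5 ones1 haB hx hmem hmβb))
  · -- B mid : impossible
    omega
  · -- u
    obtain ⟨x, hx⟩ := masterExists hno ones1 haB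
    refine distLE_mono (by omega : 2 + ((4-3) + 2) ≤ k) (distLE_trans
      (joinU hk ones1 haB hx)
      (distLE_trans (spine_down 3 (by omega) ones1 haB hx 4 (by omega) (by omega))
        (exitB5 hk5 ones1 haB hx hmem hmβb)))
  · -- v
    obtain ⟨x, hx⟩ := masterExists hno ones1 haB
    refine distLE_mono (by omega : 1 + (1 + 2) ≤ k) (distLE_trans
      (joinV hk ones1 haB hx)
      (distLE_trans (spine_up 2 (by omega) ones1 haB hx 3 (by omega) (by omega))
        (exitB5 hk5 ones1 haB hx hmem hmβb)))

end K5c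

-- AUXEND

/-- **NO-case theorem, Section 4.**  Assume `S` is a NO instance of
`k`-OV: every `k` vectors of `S` (repetitions allowed) have a common coordinate at
which they all equal `1`.  Then the diameter of `G` is at most `k`: `d(α,β) ≤ k` for
all ordered pairs of vertices `α, β` of `G`. -/
theorem no_instance_diameter (k d : ℕ) (hk : 5 ≤ k) (hd : 1 ≤ d)
    (S : Finset (Vec d)) (hone : ones d ∈ S)
    (hno : ∀ f : Fin k → Vec d, (∀ j, f j ∈ S) → ∃ x : Fin d, ∀ j, f j x = true)
    (α : Vert k d) (hα : α ∈ VertexSet k d S)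
    (β : Vert k d) (hβ : β ∈ VertexSet k d S) :
    DistLE (Adj k d S) α β k := by
  have hd0 : 0 < d := hd
  by_cases hk6 : 6 ≤ k
  · -- uniform route for `k ≥ 6`
    obtain ⟨bV, hb, t, e, he1, he2, het, hexit⟩ := grandExit hk hd0 hone hβ
    obtain ⟨aV, ha, h, s, hs1, hs2, hhs, hjoin⟩ := grandJoin hk hd0 hone hα bV hb
    obtain ⟨x, hx⟩ := masterExists hno ha hb
    refine distLE_mono (by omega : h + ((e - s) + t) ≤ k) (distLE_trans (hjoin x hx)
      (distLE_trans (spine_up s hs1 ha hb hx e (by omega) he2) (hexit aV ha x hx)))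
  · have hk5 : k = 5 := by omega
    have ones1 : InS S (fun _ : Fin k => ones d) := fun _ => hone
    rcases sourceCases hk hβ with ⟨p, xβ, rfl, hm⟩ | ⟨p, xβ, rfl, hm⟩ |
      ⟨p, xβ, rfl, hm⟩ | ⟨p, xβ, rfl, hm⟩ | ⟨i, p, xβ, h4, hik, rfl, hm⟩ |
      ⟨i, p, xβ, h4, hik, rfl, hm⟩ | ⟨p, xβ, rfl, hm⟩ | ⟨p, xβ, rfl, hm⟩ |
      ⟨i, p, xβ, h4, hik, rfl, hm⟩ | ⟨p, xβ, rfl, hm⟩ |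
      ⟨i, p, xβ, h4, hik, rfl, hm⟩ | rfl | rfl
    · exact k5_low12 hk5 hd0 hone hno hα (Or.inl hm)
    · exact k5_low12 hk5 hd0 hone hno hα (Or.inr hm)
    · exact k5_low3 hk5 hd0 hone hno hα (Or.inl hm)
    · exact k5_low3 hk5 hd0 hone hno hα (Or.inr hm)
    · -- L_{k-1} target
      have hi : i = k - 1 := by omega
      subst hi
      have hf := (setLmid_elim (by omega) (by omega) hm).1
      have hbB := extractP_inS hf hone
      obtain ⟨aV, ha, h, s, hs1, hs2, hhs, hjoin⟩ :=
        grandJoin hk hd0 hone hα (extractP p) hbB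
      obtain ⟨x, hx⟩ := masterExists hno ha hbB
      refine distLE_mono (by omega : h + ((k - 1 - s) + 2) ≤ k)
        (distLE_trans (hjoin x hx) (distLE_trans
          (spine_up s hs1 ha hbB hx (k-1) (by omega) (by omega))
          (exitTop hk ha hbB hx (Or.inl hm) hf
            (fun j hj => fills_some hf (Or.inr (by omega))))))
    · -- L'_{k-1} target
      have hi : i = k - 1 := by omega
      subst hi
      have hf := (setL'_elim hm).2.2
      have hbB := extractP_inS hf hone
      obtain ⟨aV, ha, h, s, hs1, hs2, hhs, hjoin⟩ :=
        grandJoin hk hd0 hone hα (extractP p) hbB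
      obtain ⟨x, hx⟩ := masterExists hno ha hbB
      refine distLE_mono (by omega : h + ((k - 1 - s) + 2) ≤ k)
        (distLE_trans (hjoin x hx) (distLE_trans
          (spine_up s hs1 ha hbB hx (k-1) (by omega) (by omega))
          (exitTop hk ha hbB hx (Or.inr hm) hf
            (fun j hj => fills_some hf (Or.inr (by omega))))))
    · -- L_k target
      have hf := (setLmid_elim (by omega) (le_refl k) hm).1
      have hbB := extractP_inS hf hone
      obtain ⟨aV, ha, h, s, hs1, hs2, hhs, hjoin⟩ :=
        grandJoin hk hd0 hone hα (extractP p) hbB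
      obtain ⟨x, hx⟩ := masterExists hno ha hbB
      refine distLE_mono (by omega : h + ((k - s) + 1) ≤ k)
        (distLE_trans (hjoin x hx) (distLE_trans
          (spine_up s hs1 ha hbB hx k (by omega) (le_refl k))
          (exitLk hk ha hbB hx hm
            (fun j hj => fills_some hf (Or.inr (by omega))))))
    · -- L_{k+1} target
      have hf := (setLtop_elim hk hm).1
      have hbB := extractP_inS hf hone
      obtain ⟨aV, ha, h, s, hs1, hs2, hhs, hjoin⟩ :=
        grandJoin hk hd0 hone hα (extractP p) hbB
      obtain ⟨x, hx⟩ := masterExists hno ha hbB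
      refine distLE_mono (by omega : h + ((k - s) + 1) ≤ k)
        (distLE_trans (hjoin x hx) (distLE_trans
          (spine_up s hs1 ha hbB hx k (by omega) (le_refl k))
          (exitLtop hk ha hbB hx hm
            (fun j hj => fills_some hf (by omega)))))
    · -- A_{k-1} target
      have hi : i = k - 1 := by omega
      subst hi
      obtain ⟨aV, ha, h, s, hs1, hs2, hhs, hjoin⟩ :=
        grandJoin hk hd0 hone hα (fun _ => ones d) ones1
      obtain ⟨x, hx⟩ := masterExists hno ha ones1
      refine distLE_mono (by omega : h + ((k - 1 - s) + 2) ≤ k)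
        (distLE_trans (hjoin x hx) (distLE_trans
          (spine_up s hs1 ha ones1 hx (k-1) (by omega) (by omega))
          (exitAtop hk ha ones1 hx hm)))
    · exact k5_B3 hk5 hd0 hone hno hα hm
    · omega
    · -- u target
      obtain ⟨aV, ha, h, s, hs1, hs2, hhs, hjoin⟩ :=
        grandJoin hk hd0 hone hα (fun _ => ones d) ones1
      obtain ⟨x, hx⟩ := masterExists hno ha ones1
      refine distLE_mono (by omega : h + ((k - s) + 1) ≤ k)
        (distLE_trans (hjoin x hx) (distLE_trans
          (spine_up s hs1 ha ones1 hx k (by omega) (le_refl k))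
          (exitU hk ha ones1 hx)))
    · exact k5_V hk5 hd0 hone hno hα


end DiamLB
end

section
/- (Observation 5.2) In the graph G, for all i < j, any directed path that starts at a vertex in level i, ends at a vertex in level j, and does not contain u or v, uses a vertex in every layer L_i, L_{i+1}, …, L_j. -/
namespace DiamLB

/-! ### Auxiliary machinery for Observation 5.2 -/

/-- The level of a vertex: the index of the set `L_i`, `L'_i`, `A_i`, `B_i` it
belongs to (special vertices get level 0). -/
def lev {k d : ℕ} : Vert k d → ℕ
  | .node (.L i) _ _ => i
  | .node (.L' i) _ _ => i
  | .node (.A i) _ _ => i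
  | .node (.B i) _ _ => i
  | .uu => 0
  | .vv => 0

lemma lev_setL {k d : ℕ} {S : Finset (Vec d)} {i : ℕ} {w : Vert k d}
    (h : w ∈ setL k d S i) : lev w = i := by
  obtain ⟨p, x, rfl, -⟩ := h; rfl

lemma lev_setL' {k d : ℕ} {S : Finset (Vec d)} {i : ℕ} {w : Vert k d}
    (h : w ∈ setL' k d S i) : lev w = i := by
  obtain ⟨p, x, rfl, -⟩ := h; rfl

lemma lev_setA {k d : ℕ} {S : Finset (Vec d)} {i : ℕ} {w : Vert k d}
    (h : w ∈ setA k d S i) : lev w = i := by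
  obtain ⟨p, x, rfl, -⟩ := h; rfl

lemma lev_setB {k d : ℕ} {S : Finset (Vec d)} {i : ℕ} {w : Vert k d}
    (h : w ∈ setB k d S i) : lev w = i := by
  obtain ⟨p, x, rfl, -⟩ := h; rfl

lemma setL'_bounds {k d : ℕ} {S : Finset (Vec d)} {i : ℕ} {w : Vert k d}
    (h : w ∈ setL' k d S i) : 3 ≤ i ∧ i ≤ k - 1 := by
  obtain ⟨p, x, -, h3, hk, -⟩ := h; exact ⟨h3, hk⟩

lemma setA_bounds {k d : ℕ} {S : Finset (Vec d)} {i : ℕ} {w : Vert k d}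
    (h : w ∈ setA k d S i) : 4 ≤ i ∧ i ≤ k - 1 := by
  obtain ⟨p, x, -, h3, hk, -⟩ := h; exact ⟨h3, hk⟩

lemma setB_bounds {k d : ℕ} {S : Finset (Vec d)} {i : ℕ} {w : Vert k d}
    (h : w ∈ setB k d S i) : 3 ≤ i ∧ i ≤ k - 2 := by
  obtain ⟨p, x, -, h3, hk, -⟩ := h; exact ⟨h3, hk⟩

lemma lev_level {k d : ℕ} {S : Finset (Vec d)} {i : ℕ} {w : Vert k d}
    (h : w ∈ level k d S i) : lev w = i := by
  rcases h with ((h | h) | h) | h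
  · exact lev_setL h
  · exact lev_setL' h
  · exact lev_setA h
  · exact lev_setB h

/-- Key step: an edge not touching `u, v` can only increase the level by moving from
`L_ℓ` to `L_{ℓ+1}` along a swap edge. -/
lemma step_cross {k d : ℕ} {S : Finset (Vec d)} {α β : Vert k d}
    (hα1 : α ≠ Vert.uu) (hα2 : α ≠ Vert.vv)
    (hβ1 : β ≠ Vert.uu) (hβ2 : β ≠ Vert.vv)
    (h : Adj k d S α β) {ℓ : ℕ} (h1 : lev α ≤ ℓ) (h2 : ℓ < lev β) :
    α ∈ setL k d S ℓ ∧ β ∈ setL k d S (ℓ + 1) := by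
  rcases h with h | h | h | h | h | h | h | h | h
  · -- SwapE α β
    rcases h with ⟨i, p, x, p', x', h2i, hik, -, -, hαL, hβL, -⟩ |
      ⟨p, x, p', x', -, -, hαL, hβL, -⟩ | ⟨p, x, p', x', -, -, hαL, hβL, -⟩
    · have e1 := lev_setL hαL; have e2 := lev_setL hβL
      have : i = ℓ := by omega
      subst this; exact ⟨hαL, hβL⟩
    · have e1 := lev_setL hαL; have e2 := lev_setL hβL
      have : ℓ = 1 := by omega
      subst this; exact ⟨hαL, hβL⟩
    · have e1 := lev_setL hαL; have e2 := lev_setL hβL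
      omega
  · -- SwapE β α
    rcases h with ⟨i, p, x, p', x', h2i, hik, -, -, hβL, hαL, -⟩ |
      ⟨p, x, p', x', -, -, hβL, hαL, -⟩ | ⟨p, x, p', x', -, -, hβL, hαL, -⟩
    · have e1 := lev_setL hαL; have e2 := lev_setL hβL; omega
    · have e1 := lev_setL hαL; have e2 := lev_setL hβL; omega
    · have e1 := lev_setL hαL; have e2 := lev_setL hβL
      have : ℓ = k := by omega
      subst this; exact ⟨hαL, hβL⟩
  · -- VecE α β
    obtain ⟨i, p, x, p', x', -, -, -, -, hαL, hβL, -⟩ := h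
    have e1 := lev_setL hαL; have e2 := lev_setL' hβL; omega
  · -- VecE β α
    obtain ⟨i, p, x, p', x', -, -, -, -, hβL, hαL, -⟩ := h
    have e1 := lev_setL' hαL; have e2 := lev_setL hβL; omega
  · -- CoordE
    obtain ⟨t, t', p, x, x', -, -, -, hc⟩ := h
    rcases hc with ⟨i, ha, hb⟩ | ⟨i, ha, hb⟩ | ⟨i, ha, hb⟩ | ⟨ha, hb⟩ | ⟨ha, hb⟩
    · have e1 := lev_setL' ha; have e2 := lev_setL' hb; omega
    · have e1 := lev_setL' ha; have e2 := lev_setL hb; omega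
    · have e1 := lev_setL ha; have e2 := lev_setL' hb; omega
    · have e1 := lev_setL ha; have e2 := lev_setL hb; omega
    · have e1 := lev_setL ha; have e2 := lev_setL hb; omega
  · -- ABack
    rcases h with ⟨i, t, p, x, p', x', ha, hb, -⟩ | ⟨i, p, x, p', x', ha, hb, -⟩ |
      ⟨i, p, x, p', x', ha, hb, -⟩
    · have e2 := lev_setA hb
      rcases ha with ha | ha
      · have e1 := lev_setL ha; omega
      · have e1 := lev_setL' ha; omega
    · have e1 := lev_setA ha; have e2 := lev_setL' hb
      have := setA_bounds ha; omega
    · have e1 := lev_setA ha; have e2 := lev_setA hb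
      have := setA_bounds hb; have := setA_bounds ha; omega
  · -- BBack
    rcases h with ⟨i, t, p, x, p', x', ha, hb, -⟩ | ⟨i, p, x, p', x', ha, hb, -⟩ |
      ⟨i, p, x, p', x', ha, hb, -⟩
    · have e1 := lev_setB ha
      rcases hb with hb | hb
      · have e2 := lev_setL hb; omega
      · have e2 := lev_setL' hb; omega
    · have e1 := lev_setL' ha; have e2 := lev_setB hb
      have := setB_bounds hb; have := setL'_bounds ha; omega
    · have e1 := lev_setB ha; have e2 := lev_setB hb
      have := setB_bounds ha; omega
  · -- BABack
    obtain ⟨i, -, -, ha, hb⟩ := h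
    have e1 := lev_setB ha; have e2 := lev_setA hb; omega
  · -- FixedE
    rcases h with ⟨-, hb⟩ | ⟨ha, -⟩ | ⟨-, hb⟩ | ⟨ha, -⟩
    · exact absurd hb hβ2
    · exact absurd ha hα2
    · exact absurd hb hβ1
    · exact absurd ha hα1

/-- **Observation 5.2.**  In the graph `G`, for all `i < j`, any
directed path that starts at a vertex in level `i`, ends at a vertex in level `j`, and
does not contain `u` or `v`, uses a vertex in every layer `L_i, L_{i+1}, …, L_j`. -/
theorem path_visits_every_layer (k d : ℕ) (hk : 5 ≤ k) (hd : 1 ≤ d)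
    (S : Finset (Vec d)) (hone : ones d ∈ S)
    (i j : ℕ) (hij : i < j)
    (P : ℕ → Vert k d) (n : ℕ) (hP : IsWalk (Adj k d S) P n)
    (h0 : P 0 ∈ level k d S i) (hn : P n ∈ level k d S j)
    (huv : ∀ t ≤ n, P t ≠ Vert.uu ∧ P t ≠ Vert.vv) :
    ∀ ℓ, i ≤ ℓ → ℓ ≤ j → ∃ t ≤ n, P t ∈ setL k d S ℓ := by
  classical
  have key : ∀ m, i ≤ m → m < j →
      ∃ t, t < n ∧ P t ∈ setL k d S m ∧ P (t + 1) ∈ setL k d S (m + 1) := by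
    intro m him hmj
    have h0' : lev (P 0) = i := lev_level h0
    have hn' : lev (P n) = j := lev_level hn
    set Q : ℕ → Prop := fun t => lev (P t) ≤ m with hQ
    have hQ0 : Q 0 := by simp only [hQ]; omega
    set t0 := Nat.findGreatest Q n with ht0
    have ht0n : t0 ≤ n := Nat.findGreatest_le n
    have hQt0 : Q t0 := Nat.findGreatest_spec (Nat.zero_le n) hQ0
    have ht0lt : t0 < n := by
      rcases lt_or_eq_of_le ht0n with h | h
      · exact h
      · exfalso; rw [h] at hQt0; simp only [hQ] at hQt0; omega
    have hnot : ¬ Q (t0 + 1) := Nat.findGreatest_is_greatest (Nat.lt_succ_self t0) ht0lt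
    simp only [hQ, not_le] at hnot hQt0
    have hu1 := huv t0 (le_of_lt ht0lt)
    have hu2 := huv (t0 + 1) ht0lt
    have := step_cross hu1.1 hu1.2 hu2.1 hu2.2 (hP t0 ht0lt) hQt0 hnot
    exact ⟨t0, ht0lt, this.1, this.2⟩
  intro ℓ hiℓ hℓj
  by_cases hc : ℓ < j
  · obtain ⟨t, ht, h1, -⟩ := key ℓ hiℓ hc
    exact ⟨t, le_of_lt ht, h1⟩
  · have hℓ : ℓ = j := le_antisymm hℓj (not_lt.1 hc)
    subst hℓ
    obtain ⟨t, ht, -, h2⟩ := key (ℓ - 1) (by omega) (by omega)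
    have he : ℓ - 1 + 1 = ℓ := by omega
    rw [he] at h2
    exact ⟨t + 1, by omega, h2⟩


end DiamLB
end
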